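/- arXiv:2012.14330 — 9 statements merged into one kernel-verified Lean document; each statement's English description precedes it below -/
import Mathlib

section
/- Let G be a finite simple graph on vertex set [n] with edge set E, and let a_k(x) = Σ_{F ∈ IF_k} Π_{e∈F} x_e be the generating polynomial of increasing spanning forests of G with exactly k components, in indeterminates x = (x_e)_{e∈E}. Then the sequence (a_0(x), a_1(x), …, a_n(x)) is strongly x-log-concave: for all p, q with 0 < p ≤ q < n, the polynomial a_p(x)·a_q(x) − a_{p−1}(x)·a_{q+1}(x) has only nonnegative coefficients. -/
open SimpleGraph

/-- The simple graph on `Fin n` whose edges are given by a finite set of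
ordered pairs `(i, j)` (intended with `i < j`). -/
def graphOf {n : ℕ} (F : Finset (Fin n × Fin n)) : SimpleGraph (Fin n) :=
  SimpleGraph.fromRel (fun a b => (a, b) ∈ F)

/-- `r` is the minimal vertex of its connected component in the forest `F`. -/
def IsCompMin {n : ℕ} (F : Finset (Fin n × Fin n)) (r : Fin n) : Prop :=
  ∀ w, (graphOf F).Reachable r w → r ≤ w

/-- The forest `F` is increasing: along every path starting at the minimal vertex
of a connected component, the vertex labels strictly increase. -/
def IsIncreasing {n : ℕ} (F : Finset (Fin n × Fin n)) : Prop :=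
  ∀ (r v : Fin n) (p : (graphOf F).Walk r v),
    p.IsPath → IsCompMin F r → List.Chain' (· < ·) p.support

/-- `F` is an increasing spanning forest of the graph with edge set `E`. -/
def IsISF {n : ℕ} (E F : Finset (Fin n × Fin n)) : Prop :=
  F ⊆ E ∧ (graphOf F).IsAcyclic ∧ IsIncreasing F

/-- Number of connected components of the forest `F` (isolated vertices count). -/
noncomputable def numComp {n : ℕ} (F : Finset (Fin n × Fin n)) : ℕ :=
  Nat.card (graphOf F).ConnectedComponent

/-- The set of increasing spanning forests of `E` with exactly `k` connected components. -/
def IFk {n : ℕ} (E : Finset (Fin n × Fin n)) (k : ℕ) : Set (Finset (Fin n × Fin n)) :=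
  {F | IsISF E F ∧ numComp F = k}

/-- The generating polynomial `a_k(x)` of increasing spanning forests with `k` components. -/
noncomputable def aPoly {n : ℕ} (E : Finset (Fin n × Fin n)) (k : ℕ) :
    MvPolynomial (Fin n × Fin n) ℝ :=
  ∑ᶠ F ∈ IFk E k, ∏ e ∈ F, MvPolynomial.X e

namespace ISFAux

open Finset MvPolynomial

/-- Nonnegative coefficients predicate. -/
def NN {σ : Type*} (P : MvPolynomial σ ℝ) : Prop := ∀ m, 0 ≤ P.coeff m

lemma NN.add {σ : Type*} {P Q : MvPolynomial σ ℝ} (hP : NN P) (hQ : NN Q) : NN (P + Q) :=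
  fun m => by rw [coeff_add]; exact add_nonneg (hP m) (hQ m)

lemma NN.mul {σ : Type*} {P Q : MvPolynomial σ ℝ} (hP : NN P) (hQ : NN Q) : NN (P * Q) :=
  fun m => by
    classical
    rw [coeff_mul]
    exact Finset.sum_nonneg fun x _ => mul_nonneg (hP _) (hQ _)

lemma NN_zero {σ : Type*} : NN (0 : MvPolynomial σ ℝ) := fun m => by simp

lemma NN_one {σ : Type*} : NN (1 : MvPolynomial σ ℝ) := fun m => by
  classical
  rw [coeff_one]
  split <;> norm_num

lemma NN_X {σ : Type*} (e : σ) : NN (X e : MvPolynomial σ ℝ) := fun m => by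
  classical
  rw [coeff_X']
  split <;> norm_num

lemma NN_sum {σ ι : Type*} (s : Finset ι) (f : ι → MvPolynomial σ ℝ)
    (h : ∀ i ∈ s, NN (f i)) : NN (∑ i ∈ s, f i) := by
  classical
  induction s using Finset.induction_on with
  | empty => simpa using NN_zero
  | @insert a s ha ih =>
    rw [Finset.sum_insert ha]
    exact (h _ (Finset.mem_insert_self _ _)).add
      (ih fun i hi => h i (Finset.mem_insert_of_mem hi))

lemma NN_prodX {σ : Type*} (F : Finset σ) : NN (∏ e ∈ F, (X e : MvPolynomial σ ℝ)) := by
  classical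
  induction F using Finset.induction_on with
  | empty => simpa using NN_one
  | @insert a s ha ih => rw [Finset.prod_insert ha]; exact (NN_X a).mul ih

variable {n : ℕ}

/-- Sets of edges with in-degree (from below) at most one, endpoints in `s`, card `j`. -/
def Slice (E : Finset (Fin n × Fin n)) (s : Finset (Fin n)) (j : ℕ) :
    Finset (Finset (Fin n × Fin n)) :=
  E.powerset.filter (fun F =>
    (∀ v, (F.filter (fun e => e.2 = v)).card ≤ 1) ∧ (∀ e ∈ F, e.2 ∈ s) ∧ F.card = j)

lemma mem_Slice {E : Finset (Fin n × Fin n)} {s : Finset (Fin n)} {j : ℕ}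
    {F : Finset (Fin n × Fin n)} :
    F ∈ Slice E s j ↔ F ⊆ E ∧ (∀ v, (F.filter (fun e => e.2 = v)).card ≤ 1) ∧
      (∀ e ∈ F, e.2 ∈ s) ∧ F.card = j := by
  simp [Slice, Finset.mem_filter, Finset.mem_powerset, and_assoc]

noncomputable def bP (E : Finset (Fin n × Fin n)) (s : Finset (Fin n)) (j : ℕ) :
    MvPolynomial (Fin n × Fin n) ℝ :=
  ∑ F ∈ Slice E s j, ∏ e ∈ F, X e

lemma NN_bP (E : Finset (Fin n × Fin n)) (s : Finset (Fin n)) (j : ℕ) : NN (bP E s j) :=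
  NN_sum _ _ fun F _ => NN_prodX F

lemma bP_zero (E : Finset (Fin n × Fin n)) (s : Finset (Fin n)) : bP E s 0 = 1 := by
  have : Slice E s 0 = {∅} := by
    ext F
    simp only [mem_Slice, Finset.mem_singleton, Finset.card_eq_zero]
    constructor
    · rintro ⟨-, -, -, rfl⟩; rfl
    · rintro rfl
      refine ⟨Finset.empty_subset _, fun v => ?_, fun e he => absurd he (by simp), rfl⟩
      simp
  rw [bP, this, Finset.sum_singleton, Finset.prod_empty]

lemma bP_empty (E : Finset (Fin n × Fin n)) {j : ℕ} (hj : j ≠ 0) : bP E ∅ j = 0 := by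
  have : Slice E ∅ j = ∅ := by
    ext F
    simp only [mem_Slice, Finset.notMem_empty, iff_false, not_and]
    intro _ _ hF hcard
    obtain ⟨e, he⟩ := Finset.card_ne_zero.mp (hcard ▸ hj)
    exact hF e he
  rw [bP, this, Finset.sum_empty]

end ISFAux

namespace ISFAux2
open Finset MvPolynomial ISFAux
variable {n : ℕ}

lemma slice_filter_eq (E : Finset (Fin n × Fin n)) {s : Finset (Fin n)} {a : Fin n}
    (ha : a ∉ s) (j : ℕ) :
    (Slice E (insert a s) j).filter (fun F => ∀ e ∈ F, e.2 ≠ a) = Slice E s j := by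
  ext F
  simp only [Finset.mem_filter, mem_Slice]
  constructor
  · rintro ⟨⟨h1, h2, h3, h4⟩, h5⟩
    refine ⟨h1, h2, fun e he => ?_, h4⟩
    rcases Finset.mem_insert.mp (h3 e he) with h | h
    · exact absurd h (h5 e he)
    · exact h
  · rintro ⟨h1, h2, h3, h4⟩
    exact ⟨⟨h1, h2, fun e he => Finset.mem_insert_of_mem (h3 e he), h4⟩,
      fun e he hea => ha (hea ▸ h3 e he)⟩

lemma slice_filter_not_eq (E : Finset (Fin n × Fin n)) {s : Finset (Fin n)} {a : Fin n}
    (ha : a ∉ s) (j : ℕ) :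
    (Slice E (insert a s) (j + 1)).filter (fun F => ¬ ∀ e ∈ F, e.2 ≠ a) =
      ((E.filter (fun e => e.2 = a)) ×ˢ Slice E s j).image (fun p => insert p.1 p.2) := by
  ext F
  rw [Finset.mem_filter, Finset.mem_image]
  constructor
  · rintro ⟨hS, h5⟩
    obtain ⟨h1, h2, h3, h4⟩ := mem_Slice.mp hS
    push_neg at h5
    obtain ⟨e, he, hea⟩ := h5
    refine ⟨(e, F.erase e), Finset.mem_product.mpr ⟨Finset.mem_filter.mpr ⟨h1 he, hea⟩,
      mem_Slice.mpr ⟨(Finset.erase_subset _ _).trans h1, ?_, ?_, ?_⟩⟩, Finset.insert_erase he⟩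
    · intro v
      exact le_trans (Finset.card_le_card
        (Finset.filter_subset_filter _ (Finset.erase_subset _ _))) (h2 v)
    · intro e' he'
      have he'F : e' ∈ F := Finset.mem_of_mem_erase he'
      rcases Finset.mem_insert.mp (h3 e' he'F) with h | h
      · exfalso
        have : e' = e := Finset.card_le_one.mp (h2 a) e'
          (Finset.mem_filter.mpr ⟨he'F, h⟩) e (Finset.mem_filter.mpr ⟨he, hea⟩)
        exact Finset.ne_of_mem_erase he' this
      · exact h
    · rw [Finset.card_erase_of_mem he, h4]; rfl
  · rintro ⟨⟨e, F'⟩, hm, rfl⟩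
    obtain ⟨he, hF'⟩ := Finset.mem_product.mp hm
    obtain ⟨heE, hea⟩ := Finset.mem_filter.mp he
    obtain ⟨h1, h2, h3, h4⟩ := mem_Slice.mp hF'
    have heF' : e ∉ F' := fun h => ha (hea ▸ h3 e h)
    refine ⟨mem_Slice.mpr ⟨Finset.insert_subset heE h1, ?_, ?_, ?_⟩, ?_⟩
    · intro v
      rw [Finset.filter_insert]
      split
      · rename_i hv
        have hemp : F'.filter (fun e => e.2 = v) = ∅ := by
          rw [Finset.filter_eq_empty_iff]
          intro e' he' h
          exact ha ((hea ▸ hv ▸ h : e'.2 = a) ▸ h3 e' he')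
        rw [hemp]
        simp
      · exact h2 v
    · intro e' he'
      rcases Finset.mem_insert.mp he' with rfl | h
      · exact hea ▸ Finset.mem_insert_self _ _
      · exact Finset.mem_insert_of_mem (h3 e' h)
    · rw [Finset.card_insert_of_notMem heF', h4]
    · push_neg
      exact ⟨e, Finset.mem_insert_self _ _, hea⟩

lemma bP_insert (E : Finset (Fin n × Fin n)) {s : Finset (Fin n)} {a : Fin n}
    (ha : a ∉ s) (j : ℕ) :
    bP E (insert a s) (j + 1) =
      bP E s (j + 1) + (∑ e ∈ E.filter (fun e => e.2 = a), X e) * bP E s j := by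
  classical
  rw [bP, ← Finset.sum_filter_add_sum_filter_not (Slice E (insert a s) (j+1))
    (fun F => ∀ e ∈ F, e.2 ≠ a), slice_filter_eq E ha, slice_filter_not_eq E ha]
  congr 1
  rw [Finset.sum_image ?hinj]
  case hinj =>
    rintro ⟨e1, F1⟩ hm1 ⟨e2, F2⟩ hm2 heq
    simp only [Finset.mem_coe, Finset.mem_product, Finset.mem_filter, mem_Slice] at hm1 hm2 heq
    have hne1 : e1 ∉ F1 := fun h => ha (hm1.1.2 ▸ hm1.2.2.2.1 e1 h)
    have hne2 : e2 ∉ F2 := fun h => ha (hm2.1.2 ▸ hm2.2.2.2.1 e2 h)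
    have he12 : e1 = e2 := by
      have : e1 ∈ insert e2 F2 := heq ▸ Finset.mem_insert_self e1 F1
      rcases Finset.mem_insert.mp this with h | h
      · exact h
      · exact absurd (hm2.2.2.2.1 e1 h) (fun hh => ha (hm1.1.2 ▸ hh))
    subst he12
    have : F1 = F2 := by
      rw [← Finset.erase_insert hne1, heq, Finset.erase_insert hne2]
    simp [this]
  rw [Finset.sum_product, Finset.sum_mul]
  apply Finset.sum_congr rfl
  intro e he
  rw [bP, Finset.mul_sum]
  apply Finset.sum_congr rfl
  intro F hF
  have heF : e ∉ F := by
    simp only [mem_Slice] at hF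
    simp only [Finset.mem_filter] at he
    exact fun h => ha (he.2 ▸ hF.2.2.1 e h)
  rw [Finset.prod_insert heF]

end ISFAux2

namespace ISFAux3
open Finset MvPolynomial ISFAux ISFAux2
variable {n : ℕ}

set_option maxHeartbeats 1000000 in
lemma key (E : Finset (Fin n × Fin n)) (s : Finset (Fin n)) :
    ∀ c d : ℕ, d ≤ c →
      NN (bP E s c * bP E s (d + 1) - bP E s (c + 1) * bP E s d) := by
  classical
  induction s using Finset.induction_on with
  | empty =>
    intro c d hdc
    rw [bP_empty E (Nat.succ_ne_zero d), bP_empty E (Nat.succ_ne_zero c)]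
    simpa using NN_zero
  | @insert a s ha ih =>
    intro c d hdc
    rcases eq_or_lt_of_le hdc with rfl | hlt
    · rw [mul_comm, sub_self]
      exact NN_zero
    · obtain ⟨c', rfl⟩ : ∃ c', c = c' + 1 := ⟨c - 1, by omega⟩
      set z := ∑ e ∈ E.filter (fun e => e.2 = a), X e (σ := Fin n × Fin n) (R := ℝ) with hz
      have hzNN : NN z := NN_sum _ _ fun e _ => NN_X e
      cases d with
      | zero =>
        rw [bP_insert E ha c', bP_insert E ha (c' + 1), bP_insert E ha 0,
          bP_zero, bP_zero]
        have hexp : (bP E s (c' + 1) + z * bP E s c') * (bP E s (0 + 1) + z * 1) -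
            (bP E s (c' + 1 + 1) + z * bP E s (c' + 1)) * 1 =
            (bP E s (c' + 1) * bP E s (0 + 1) - bP E s (c' + 1 + 1) * bP E s 0) +
              (z * (bP E s c' * bP E s (0 + 1)) + z * z * (bP E s c' * 1)) := by
          rw [bP_zero]; ring
        rw [hexp]
        exact (ih (c' + 1) 0 (Nat.zero_le _)).add
          ((hzNN.mul ((NN_bP E s c').mul (NN_bP E s 1))).add
            ((hzNN.mul hzNN).mul ((NN_bP E s c').mul NN_one)))
      | succ d' =>
        have hd'c' : d' + 1 ≤ c' := by omega
        rw [bP_insert E ha c', bP_insert E ha (c' + 1), bP_insert E ha d',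
          bP_insert E ha (d' + 1)]
        have hexp : (bP E s (c' + 1) + z * bP E s c') *
              (bP E s (d' + 1 + 1) + z * bP E s (d' + 1)) -
            (bP E s (c' + 1 + 1) + z * bP E s (c' + 1)) *
              (bP E s (d' + 1) + z * bP E s d') =
            (bP E s (c' + 1) * bP E s (d' + 1 + 1) - bP E s (c' + 1 + 1) * bP E s (d' + 1)) +
              (z * ((bP E s c' * bP E s (d' + 1 + 1) - bP E s (c' + 1) * bP E s (d' + 1)) +
                (bP E s (c' + 1) * bP E s (d' + 1) - bP E s (c' + 1 + 1) * bP E s d')) +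
               z * z * (bP E s c' * bP E s (d' + 1) - bP E s (c' + 1) * bP E s d')) := by
          ring
        rw [hexp]
        refine NN.add ?_ (NN.add (NN.mul hzNN (NN.add ?_ ?_)) (NN.mul (NN.mul hzNN hzNN) ?_))
        · exact ih (c' + 1) (d' + 1) (by omega)
        · exact ih c' (d' + 1) hd'c'
        · exact ih (c' + 1) d' (by omega)
        · exact ih c' d' (by omega)
      
end ISFAux3

namespace ISFGraph

variable {n : ℕ} {F : Finset (Fin n × Fin n)}

lemma adj_iff (hFlt : ∀ e ∈ F, e.1 < e.2) {u v : Fin n} :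
    (graphOf F).Adj u v ↔ ((u, v) ∈ F ∨ (v, u) ∈ F) := by
  constructor
  · rintro ⟨-, h⟩; exact h
  · rintro (h | h)
    · exact ⟨(hFlt _ h).ne, Or.inl h⟩
    · exact ⟨(hFlt _ h).ne', Or.inr h⟩

/-- Key chain lemma: in a graph with in-degree at most one, a path whose
start has no smaller neighbour inside it has increasing support. -/
lemma chain_lemma (hFlt : ∀ e ∈ F, e.1 < e.2)
    (hdeg : ∀ v, (F.filter (fun e => e.2 = v)).card ≤ 1) :
    ∀ {u v : Fin n} (p : (graphOf F).Walk u v), p.IsPath →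
      (∀ w, (graphOf F).Adj u w → w ∈ p.support → u < w) →
      List.Chain' (· < ·) p.support := by
  intro u v p
  induction p with
  | nil => intro _ _; simp [List.Chain']
  | @cons u u1 v h q ih =>
    intro hp hstart
    have hu1 : u < u1 := hstart u1 h (by rw [Walk.support_cons]; simp)
    rw [Walk.support_cons, q.support_eq_cons, List.Chain', List.isChain_cons_cons, ← q.support_eq_cons]
    refine ⟨hu1, ?_⟩
    apply ih (Walk.IsPath.of_cons hp)
    intro w hw hwmem
    rcases lt_trichotomy w u1 with hlt | heq | hgt
    · exfalso
      have hw1 : (w, u1) ∈ F := by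
        rcases (adj_iff hFlt).mp hw with h1 | h1
        · exact absurd (hFlt _ h1) (by simpa using hlt.asymm)
        · exact h1
      have huu1 : (u, u1) ∈ F := by
        rcases (adj_iff hFlt).mp h with h1 | h1
        · exact h1
        · exact absurd (hFlt _ h1) (by simpa using hu1.asymm)
      have hwu : w = u := by
        have := Finset.card_le_one.mp (hdeg u1) (w, u1)
          (Finset.mem_filter.mpr ⟨hw1, rfl⟩) (u, u1) (Finset.mem_filter.mpr ⟨huu1, rfl⟩)
        exact congrArg Prod.fst this
      subst hwu
      exact ((Walk.cons_isPath_iff h q).mp hp).2 hwmem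
    · exact absurd heq.symm hw.ne
    · exact hgt

def IsRoot (F : Finset (Fin n × Fin n)) (r : Fin n) : Prop := ∀ e ∈ F, e.2 ≠ r

lemma root_min (hFlt : ∀ e ∈ F, e.1 < e.2)
    (hdeg : ∀ v, (F.filter (fun e => e.2 = v)).card ≤ 1)
    {r : Fin n} (hr : IsRoot F r) : IsCompMin F r := by
  intro w hw
  obtain ⟨p0⟩ := hw
  obtain ⟨q, hqp⟩ := p0.toPath
  have hchain := chain_lemma hFlt hdeg q hqp ?_
  · rw [List.Chain', List.isChain_iff_pairwise] at hchain
    have hwmem : w ∈ q.support := q.end_mem_support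
    rw [q.support_eq_cons] at hchain hwmem
    rcases List.mem_cons.mp hwmem with rfl | hmem
    · exact le_refl _
    · exact le_of_lt ((List.pairwise_cons.mp hchain).1 w hmem)
  · intro w' hw' _
    rcases (adj_iff hFlt).mp hw' with h1 | h1
    · exact hFlt _ h1
    · exact absurd rfl (hr _ h1)

lemma exists_root (hFlt : ∀ e ∈ F, e.1 < e.2) :
    ∀ v : Fin n, ∃ r, IsRoot F r ∧ (graphOf F).Reachable v r := by
  have H : ∀ (k : ℕ) (v : Fin n), (v : ℕ) ≤ k →
      ∃ r, IsRoot F r ∧ (graphOf F).Reachable v r := by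
    intro k
    induction k with
    | zero =>
      intro v hv
      refine ⟨v, fun e he h2 => ?_, Reachable.refl _⟩
      have := hFlt e he
      rw [h2] at this
      simp only [Fin.lt_def] at this
      omega
    | succ k ihk =>
      intro v hv
      by_cases hpar : ∃ e ∈ F, e.2 = v
      · obtain ⟨⟨a, b⟩, he, he2⟩ := hpar
        simp only at he2
        rw [he2] at he
        have hlt : (a : ℕ) < (v : ℕ) := hFlt _ he
        obtain ⟨r, hr, hreach⟩ := ihk a (by omega)
        refine ⟨r, hr, ?_⟩
        have hadj : (graphOf F).Adj v a := (adj_iff hFlt).mpr (Or.inr he)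
        exact hadj.reachable.trans hreach
      · push_neg at hpar
        exact ⟨v, hpar, Reachable.refl _⟩
  intro v
  exact H (v : ℕ) v le_rfl

lemma numComp_eq (hFlt : ∀ e ∈ F, e.1 < e.2)
    (hdeg : ∀ v, (F.filter (fun e => e.2 = v)).card ≤ 1) :
    numComp F = n - F.card := by
  classical
  set R : Finset (Fin n) := Finset.univ.filter (fun v => ∀ e ∈ F, e.2 ≠ v) with hR
  have hbij : Function.Bijective
      (fun x : {x // x ∈ R} => (graphOf F).connectedComponentMk x.1) := by
    constructor
    · rintro ⟨x, hx⟩ ⟨y, hy⟩ hxy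
      have hreach := SimpleGraph.ConnectedComponent.exact hxy
      rw [hR, Finset.mem_filter] at hx hy
      exact Subtype.ext (le_antisymm (root_min hFlt hdeg hx.2 y hreach)
        (root_min hFlt hdeg hy.2 x hreach.symm))
    · intro c
      obtain ⟨v, rfl⟩ := c.exists_rep
      obtain ⟨r, hr, hreach⟩ := exists_root hFlt v
      exact ⟨⟨r, by rw [hR, Finset.mem_filter]; exact ⟨Finset.mem_univ _, hr⟩⟩,
        SimpleGraph.ConnectedComponent.sound hreach.symm⟩
  have h1 : Nat.card {x // x ∈ R} = numComp F := Nat.card_eq_of_bijective _ hbij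
  have h2 : Nat.card {x // x ∈ R} = R.card := by
    rw [Nat.card_eq_fintype_card, Fintype.card_coe]
  have h3 : R = Finset.univ \ F.image Prod.snd := by
    ext v
    simp only [hR, Finset.mem_filter, Finset.mem_univ, true_and, Finset.mem_sdiff,
      Finset.mem_image, not_exists]
    push_neg
    tauto
  have h4 : (F.image Prod.snd).card = F.card := by
    apply Finset.card_image_of_injOn
    intro e he e' he' hee
    exact Finset.card_le_one.mp (hdeg e.2) e (Finset.mem_filter.mpr ⟨he, rfl⟩) e'
      (Finset.mem_filter.mpr ⟨he', hee.symm⟩)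
  have h5 : R.card = n - F.card := by
    rw [h3, Finset.card_sdiff_of_subset (Finset.subset_univ _), h4, Finset.card_univ, Fintype.card_fin]
  omega

lemma increasing_of_indeg (hFlt : ∀ e ∈ F, e.1 < e.2)
    (hdeg : ∀ v, (F.filter (fun e => e.2 = v)).card ≤ 1) : IsIncreasing F := by
  intro r v p hp hmin
  apply chain_lemma hFlt hdeg p hp
  intro w hw _
  rcases (adj_iff hFlt).mp hw with h | h
  · exact hFlt _ h
  · exact absurd (hmin w hw.reachable) (not_le.mpr (hFlt _ h))

lemma concat_isPath {V : Type*} {G : SimpleGraph V} {u v w : V} {p : G.Walk u v}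
    {h : G.Adj v w} (hp : p.IsPath) (hw : w ∉ p.support) : (p.concat h).IsPath := by
  rw [← Walk.isPath_reverse_iff, Walk.reverse_concat]
  exact hp.reverse.cons (by rw [Walk.support_reverse, List.mem_reverse]; exact hw)

lemma acyclic_of_indeg (hFlt : ∀ e ∈ F, e.1 < e.2)
    (hdeg : ∀ v, (F.filter (fun e => e.2 = v)).card ≤ 1) : (graphOf F).IsAcyclic := by
  classical
  intro v c hc
  obtain ⟨m, hmmem', hmax'⟩ := Finset.exists_max_image c.support.toFinset id
    ⟨v, List.mem_toFinset.mpr c.start_mem_support⟩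
  have hmmem : m ∈ c.support := List.mem_toFinset.mp hmmem'
  have hmax : ∀ x ∈ c.support, x ≤ m := fun x hx => hmax' x (List.mem_toFinset.mpr hx)
  set c' := c.rotate m hmmem with hc'
  have hc'cyc : c'.IsCycle := hc.rotate hmmem
  have hc'sup : ∀ x ∈ c'.support, x ≤ m := by
    intro x hx
    rw [c'.support_eq_cons] at hx
    rcases List.mem_cons.mp hx with rfl | hx
    · exact le_refl _
    · have hrot := Walk.support_rotate c m hmmem
      have : x ∈ c.support.tail := hrot.mem_iff.mp hx
      exact hmax x (List.mem_of_mem_tail this)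
  cases hcc' : c' with
  | nil => exact hc'cyc.ne_nil hcc'
  | @cons _ x _ h q =>
    have hqpath : q.IsPath := by
      rw [Walk.isPath_def]
      have := ((Walk.isCycle_def _).mp hc'cyc).2.2
      rwa [hcc', Walk.support_cons, List.tail_cons] at this
    have hxm : x < m := by
      have hxmem : x ∈ c'.support := by
        rw [hcc', Walk.support_cons]
        exact List.mem_cons_of_mem _ q.start_mem_support
      exact lt_of_le_of_ne (hc'sup x hxmem) h.ne'
    have hxF : (x, m) ∈ F := by
      rcases (adj_iff hFlt).mp h with h1 | h1
      · exact absurd (hFlt _ h1) (by simpa using hxm.asymm)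
      · exact h1
    have hmx : m ≠ x := h.ne
    obtain ⟨y, h2, q2, hq2⟩ := Walk.exists_eq_cons_of_ne hmx q.reverse
    have hym : y < m := by
      have hymem : y ∈ q.support := by
        have : y ∈ q.reverse.support := by
          rw [hq2, Walk.support_cons]
          exact List.mem_cons_of_mem _ q2.start_mem_support
        rwa [Walk.support_reverse, List.mem_reverse] at this
      have : y ∈ c'.support := by
        rw [hcc', Walk.support_cons]
        exact List.mem_cons_of_mem _ hymem
      exact lt_of_le_of_ne (hc'sup y this) h2.ne'
    have hyF : (y, m) ∈ F := by
      rcases (adj_iff hFlt).mp h2 with h1 | h1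
      · exact absurd (hFlt _ h1) (by simpa using hym.asymm)
      · exact h1
    have hxy : x = y := by
      have := Finset.card_le_one.mp (hdeg m) (x, m)
        (Finset.mem_filter.mpr ⟨hxF, rfl⟩) (y, m) (Finset.mem_filter.mpr ⟨hyF, rfl⟩)
      exact congrArg Prod.fst this
    subst hxy
    have hq2path : q2.IsPath := by
      have : q.reverse.IsPath := hqpath.reverse
      rw [hq2] at this
      exact this.of_cons
    have hq2nil : q2 = Walk.nil := by
      have := congrArg Subtype.val (Path.loop_eq ⟨q2, hq2path⟩)
      simpa using this
    have hqlen : q.length = 1 := by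
      have : q.reverse.length = 1 := by rw [hq2, hq2nil]; rfl
      rwa [Walk.length_reverse] at this
    have h3 := hc'cyc.three_le_length
    rw [hcc', Walk.length_cons, hqlen] at h3
    omega

lemma indeg_of_ISF {E : Finset (Fin n × Fin n)} (hE : ∀ e ∈ E, e.1 < e.2) (h : IsISF E F) :
    ∀ v, (F.filter (fun e => e.2 = v)).card ≤ 1 := by
  classical
  obtain ⟨hFE, hacyc, hinc⟩ := h
  have hFlt : ∀ e ∈ F, e.1 < e.2 := fun e he => hE e (hFE he)
  intro v
  by_contra hcard
  push_neg at hcard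
  obtain ⟨e, he, e', he', hne⟩ := Finset.one_lt_card.mp hcard
  obtain ⟨heF, he2⟩ := Finset.mem_filter.mp he
  obtain ⟨heF', he2'⟩ := Finset.mem_filter.mp he'
  obtain ⟨a, v2⟩ := e
  obtain ⟨b, v3⟩ := e'
  simp only at he2 he2'
  rw [he2] at heF hne
  rw [he2'] at heF' hne
  have hab : a ≠ b := fun h => hne (by rw [h])
  have hav : a < v := hFlt _ heF
  have hbv : b < v := hFlt _ heF'
  have hSne : (Finset.univ.filter (fun w => (graphOf F).Reachable v w)).Nonempty :=
    ⟨v, Finset.mem_filter.mpr ⟨Finset.mem_univ _, Reachable.refl _⟩⟩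
  set r := (Finset.univ.filter (fun w => (graphOf F).Reachable v w)).min' hSne with hr
  have hrS := Finset.min'_mem _ hSne
  have hvr : (graphOf F).Reachable v r := (Finset.mem_filter.mp hrS).2
  have hmin : IsCompMin F r := by
    intro w hw
    apply Finset.min'_le
    rw [Finset.mem_filter]
    exact ⟨Finset.mem_univ _, hvr.trans hw⟩
  have build : ∀ x : Fin n, (x, v) ∈ F → x < v →
      ∃ (pa : (graphOf F).Walk r x) (hadj : (graphOf F).Adj x v),
        (pa.concat hadj).IsPath ∧ v ∉ pa.support := by
    intro x hxF hxv
    have hadj : (graphOf F).Adj x v := (adj_iff hFlt).mpr (Or.inl hxF)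
    have hra : (graphOf F).Reachable r x := hvr.symm.trans hadj.reachable.symm
    obtain ⟨w0⟩ := hra
    obtain ⟨pa, hpa⟩ := w0.toPath
    have hchain := hinc r x pa hpa hmin
    rw [List.Chain', List.isChain_iff_pairwise] at hchain
    have hvnot : v ∉ pa.support := by
      intro hv_mem
      have hsup : pa.support = (pa.reverse.support.tail).reverse ++ [x] := by
        have h2 : pa.support.reverse = x :: pa.reverse.support.tail := by
          rw [← Walk.support_reverse]; exact pa.reverse.support_eq_cons
        calc pa.support = pa.support.reverse.reverse := by rw [List.reverse_reverse]
        _ = (x :: pa.reverse.support.tail).reverse := by rw [h2]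
        _ = (pa.reverse.support.tail).reverse ++ [x] := by simp
      rw [hsup] at hchain hv_mem
      rcases List.mem_append.mp hv_mem with hvl | hvl
      · have hvx := (List.pairwise_append.mp hchain).2.2 v hvl x (List.mem_singleton_self x)
        exact absurd (hvx.trans hxv) (lt_irrefl v)
      · rw [List.mem_singleton] at hvl
        rw [hvl] at hxv
        exact absurd hxv (lt_irrefl x)
    exact ⟨pa, hadj, concat_isPath hpa hvnot, hvnot⟩
  obtain ⟨pa, hadja, hPa, hva⟩ := build a heF hav
  obtain ⟨pb, hadjb, hPb, hvb⟩ := build b heF' hbv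
  have hPP : pa.concat hadja = pb.concat hadjb := by
    have := isAcyclic_iff_path_unique.mp hacyc ⟨pa.concat hadja, hPa⟩ ⟨pb.concat hadjb, hPb⟩
    exact congrArg Subtype.val this
  have hmema : s(a, v) ∈ (pa.concat hadja).edges := by
    rw [Walk.edges_concat, List.concat_eq_append, List.mem_append]
    right
    exact List.mem_singleton_self _
  rw [hPP, Walk.edges_concat, List.concat_eq_append, List.mem_append] at hmema
  rcases hmema with hmem | hmem
  · exact hvb (Walk.snd_mem_support_of_mem_edges pb hmem)
  · rw [List.mem_singleton, Sym2.eq_iff] at hmem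
    rcases hmem with ⟨h1, -⟩ | ⟨h1, h2⟩
    · exact hab h1
    · rw [h1] at hav
      exact absurd hav (lt_irrefl v)

end ISFGraph

namespace ISFGlue
open Finset MvPolynomial ISFAux ISFAux2 ISFAux3 ISFGraph
variable {n : ℕ}

lemma IFk_eq (hn : 1 ≤ n) {E : Finset (Fin n × Fin n)} (hE : ∀ e ∈ E, e.1 < e.2)
    {k : ℕ} (hk : k ≤ n) :
    IFk E k = ↑(Slice E Finset.univ (n - k)) := by
  ext F
  rw [Finset.mem_coe, mem_Slice]
  constructor
  · rintro ⟨⟨hFE, hacyc, hinc⟩, hcomp⟩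
    have hdeg := indeg_of_ISF hE ⟨hFE, hacyc, hinc⟩
    have hFlt : ∀ e ∈ F, e.1 < e.2 := fun e he => hE e (hFE he)
    have hcard_le : F.card ≤ n := by
      have h4 : (F.image Prod.snd).card = F.card := by
        apply Finset.card_image_of_injOn
        intro e he e' he' hee
        exact Finset.card_le_one.mp (hdeg e.2) e (Finset.mem_filter.mpr ⟨he, rfl⟩) e'
          (Finset.mem_filter.mpr ⟨he', hee.symm⟩)
      calc F.card = (F.image Prod.snd).card := h4.symm
      _ ≤ (Finset.univ : Finset (Fin n)).card := Finset.card_le_card (Finset.subset_univ _)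
      _ = n := by rw [Finset.card_univ, Fintype.card_fin]
    have hnum := numComp_eq hFlt hdeg
    rw [numComp] at hnum
    rw [numComp] at hcomp
    refine ⟨hFE, hdeg, fun e _ => Finset.mem_univ _, by omega⟩
  · rintro ⟨hFE, hdeg, -, hcard⟩
    have hFlt : ∀ e ∈ F, e.1 < e.2 := fun e he => hE e (hFE he)
    refine ⟨⟨hFE, acyclic_of_indeg hFlt hdeg, increasing_of_indeg hFlt hdeg⟩, ?_⟩
    rw [numComp_eq hFlt hdeg, hcard]
    omega

lemma aPoly_eq (hn : 1 ≤ n) {E : Finset (Fin n × Fin n)} (hE : ∀ e ∈ E, e.1 < e.2)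
    {k : ℕ} (hk : k ≤ n) :
    aPoly E k = bP E Finset.univ (n - k) := by
  rw [aPoly, IFk_eq hn hE hk, finsum_mem_coe_finset, bP]

end ISFGlue

/-- Strong x-log-concavity of the generating polynomials of increasing
spanning forests of a finite simple graph on `[n]`. -/
theorem isf_strongly_x_log_concave (n : ℕ) (hn : 1 ≤ n)
    (E : Finset (Fin n × Fin n)) (hE : ∀ e ∈ E, e.1 < e.2)
    (p q : ℕ) (hp : 0 < p) (hpq : p ≤ q) (hq : q < n) :
    ∀ m : Fin n × Fin n →₀ ℕ,
      0 ≤ (aPoly E p * aPoly E q - aPoly E (p - 1) * aPoly E (q + 1)).coeff m := by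
  intro m
  have hpn : p ≤ n := le_of_lt (lt_of_le_of_lt hpq hq)
  have hq1 : q + 1 ≤ n := hq
  rw [ISFGlue.aPoly_eq hn hE hpn, ISFGlue.aPoly_eq hn hE (le_of_lt hq),
    ISFGlue.aPoly_eq hn hE (le_trans (Nat.sub_le _ _) hpn), ISFGlue.aPoly_eq hn hE hq1]
  have e1 : n - (p - 1) = (n - p) + 1 := by omega
  have e2 : n - q = (n - (q + 1)) + 1 := by omega
  rw [e1, e2]
  have h := ISFAux3.key E Finset.univ (n - p) (n - (q + 1)) (by omega) m
  exact h
end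

section
/- Let G be a finite simple graph on vertex set [n]. For all p, q with 0 < p ≤ q < n, the cardinalities of the sets of increasing spanning forests satisfy |IF_p| · |IF_q| ≥ |IF_{p−1}| · |IF_{q+1}|. -/
open SimpleGraph

/-- Sum over `m`-subsets of `s` of the product of `d`. -/
def Asum {ι : Type*} [DecidableEq ι] (d : ι → ℕ) (s : Finset ι) (m : ℕ) : ℕ :=
  ∑ S ∈ s.powersetCard m, ∏ i ∈ S, d i

lemma Asum_zero {ι : Type*} [DecidableEq ι] (d : ι → ℕ) (s : Finset ι) : Asum d s 0 = 1 := by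
  simp [Asum]

lemma Asum_empty {ι : Type*} [DecidableEq ι] (d : ι → ℕ) (m : ℕ) :
    Asum d (∅ : Finset ι) (m + 1) = 0 := by
  rw [Asum, Finset.powersetCard_eq_empty.mpr (by simp)]
  simp

lemma Asum_insert {ι : Type*} [DecidableEq ι] (d : ι → ℕ) {s : Finset ι} {i : ι} (hi : i ∉ s)
    (m : ℕ) : Asum d (insert i s) (m + 1) = Asum d s (m + 1) + d i * Asum d s m := by
  classical
  rw [Asum, Finset.powersetCard_succ_insert hi]
  rw [Finset.sum_union]
  · congr 1
    rw [Finset.sum_image]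
    · rw [Asum, Finset.mul_sum]
      refine Finset.sum_congr rfl fun S hS => ?_
      have hiS : i ∉ S := fun h => hi (Finset.mem_powersetCard.mp hS |>.1 h)
      rw [Finset.prod_insert hiS]
    · intro S hS T hT hST
      have hiS : i ∉ S := fun h => hi (Finset.mem_powersetCard.mp hS |>.1 h)
      have hiT : i ∉ T := fun h => hi (Finset.mem_powersetCard.mp hT |>.1 h)
      exact (Finset.insert_erase_invOn.2.injOn (by simpa using hiS) (by simpa using hiT)) hST
  · rw [Finset.disjoint_left]
    intro S hS hS'
    obtain ⟨T, hT, rfl⟩ := Finset.mem_image.mp hS'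
    exact (Finset.mem_powersetCard.mp hS |>.1 (Finset.mem_insert_self i T) : i ∈ s) |> hi

lemma Asum_lc {ι : Type*} [DecidableEq ι] (d : ι → ℕ) (s : Finset ι) :
    ∀ a b : ℕ, a ≤ b → Asum d s a * Asum d s (b + 2) ≤ Asum d s (a + 1) * Asum d s (b + 1) := by
  classical
  induction s using Finset.induction_on with
  | empty =>
    intro a b _
    rw [Asum_empty]
    simp
  | @insert i s his IH =>
    have hstep : ∀ a b : ℕ, a ≤ b →
        Asum d s a * Asum d s (b + 1) ≤ Asum d s (a + 1) * Asum d s b := by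
      intro a b hab
      rcases eq_or_lt_of_le hab with rfl | hlt
      · rw [mul_comm]
      · obtain ⟨b', rfl⟩ : ∃ b', b = b' + 1 := ⟨b - 1, by omega⟩
        exact IH a b' (by omega)
    intro a b hab
    match a with
    | 0 =>
      rw [Asum_zero, Asum_insert d his, Asum_insert d his, Asum_insert d his, one_mul]
      have t1 := IH 0 b hab
      rw [Asum_zero, one_mul] at t1
      rw [Asum_zero]
      nlinarith [Nat.zero_le (d i * Asum d s b), Nat.zero_le (Asum d s (b+1))]
    | (a'' + 1) =>
      rw [Asum_insert d his, Asum_insert d his, Asum_insert d his, Asum_insert d his]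
      have t1 := IH (a'' + 1) b hab
      have t2a := IH a'' b (by omega)
      have t2b := hstep (a'' + 1) b hab
      have t2 : Asum d s a'' * Asum d s (b + 2) ≤ Asum d s (a'' + 2) * Asum d s b :=
        calc Asum d s a'' * Asum d s (b + 2) ≤ Asum d s (a'' + 1) * Asum d s (b + 1) := t2a
        _ ≤ Asum d s (a'' + 2) * Asum d s b := t2b
      have t3 := hstep a'' b (by omega)
      have m2 := Nat.mul_le_mul_left (d i) t2
      have m3 := Nat.mul_le_mul_left (d i * d i) t3
      nlinarith [t1, m2, m3]


/-- each vertex is the top of at most one edge -/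
def GoodF {n : ℕ} (F : Finset (Fin n × Fin n)) : Prop :=
  ∀ e ∈ F, ∀ e' ∈ F, e.2 = e'.2 → e = e'

instance {n : ℕ} (F : Finset (Fin n × Fin n)) : Decidable (GoodF F) :=
  inferInstanceAs (Decidable (∀ e ∈ F, ∀ e' ∈ F, e.2 = e'.2 → e = e'))

def cnt {n : ℕ} (E : Finset (Fin n × Fin n)) (s : Finset (Fin n)) (m : ℕ) :
    Finset (Finset (Fin n × Fin n)) :=
  E.powerset.filter (fun F => GoodF F ∧ F.card = m ∧ F.image Prod.snd ⊆ s)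

lemma mem_cnt {n : ℕ} {E : Finset (Fin n × Fin n)} {s : Finset (Fin n)} {m : ℕ}
    {F : Finset (Fin n × Fin n)} :
    F ∈ cnt E s m ↔ F ⊆ E ∧ GoodF F ∧ F.card = m ∧ F.image Prod.snd ⊆ s := by
  simp [cnt, Finset.mem_filter, Finset.mem_powerset, and_assoc]

lemma cnt_zero {n : ℕ} (E : Finset (Fin n × Fin n)) (s : Finset (Fin n)) :
    cnt E s 0 = {∅} := by
  ext F
  simp only [mem_cnt, Finset.mem_singleton, Finset.card_eq_zero]
  constructor
  · rintro ⟨-, -, rfl, -⟩; rfl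
  · rintro rfl
    refine ⟨Finset.empty_subset _, ?_, rfl, by simp⟩
    intro e he; simp at he

lemma cnt_empty {n : ℕ} (E : Finset (Fin n × Fin n)) (m : ℕ) :
    cnt E ∅ (m + 1) = ∅ := by
  ext F
  simp only [mem_cnt, Finset.notMem_empty, iff_false, not_and]
  rintro - - hc himg
  have : F = ∅ := by
    rw [← Finset.subset_empty]
    intro e he
    exact absurd (himg (Finset.mem_image_of_mem _ he)) (by simp)
  simp [this] at hc

lemma cnt_insert_card {n : ℕ} (E : Finset (Fin n × Fin n)) {s : Finset (Fin n)} {i : Fin n}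
    (his : i ∉ s) (m : ℕ) :
    (cnt E (insert i s) (m + 1)).card
      = (cnt E s (m + 1)).card + (E.filter fun e => e.2 = i).card * (cnt E s m).card := by
  classical
  set A := E.filter (fun e => e.2 = i) with hA
  have hsplit := (Finset.filter_union_filter_not_eq
    (fun F => i ∈ F.image Prod.snd) (cnt E (insert i s) (m + 1))).symm
  rw [hsplit, Finset.card_union_of_disjoint (Finset.disjoint_filter_filter_not _ _ _)]
  have h2 : (cnt E (insert i s) (m + 1)).filter (fun F => ¬ i ∈ F.image Prod.snd)
      = cnt E s (m + 1) := by
    ext F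
    simp only [Finset.mem_filter, mem_cnt]
    constructor
    · rintro ⟨⟨hFE, hg, hc, himg⟩, hni⟩
      refine ⟨hFE, hg, hc, fun x hx => ?_⟩
      rcases Finset.mem_insert.mp (himg hx) with rfl | h
      · exact absurd hx hni
      · exact h
    · rintro ⟨hFE, hg, hc, himg⟩
      exact ⟨⟨hFE, hg, hc, himg.trans (Finset.subset_insert _ _)⟩,
        fun h => his (himg h)⟩
  have h1 : (cnt E (insert i s) (m + 1)).filter (fun F => i ∈ F.image Prod.snd)
      = (A ×ˢ cnt E s m).image (fun p => insert p.1 p.2) := by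
    ext F
    simp only [Finset.mem_filter, Finset.mem_image, Finset.mem_product, mem_cnt]
    constructor
    · rintro ⟨⟨hFE, hg, hc, himg⟩, hi⟩
      obtain ⟨e, he, he2⟩ := hi
      refine ⟨(e, F.erase e), ⟨?_, ?_, ?_, ?_, ?_⟩, ?_⟩
      · rw [hA]; exact Finset.mem_filter.mpr ⟨hFE he, he2⟩
      · exact (Finset.erase_subset _ _).trans hFE
      · intro x hx y hy hxy
        exact hg x (Finset.mem_of_mem_erase hx) y (Finset.mem_of_mem_erase hy) hxy
      · rw [Finset.card_erase_of_mem he, hc]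
        omega
      · intro x hx
        obtain ⟨y, hy, rfl⟩ := Finset.mem_image.mp hx
        have hyF := Finset.mem_of_mem_erase hy
        rcases Finset.mem_insert.mp (himg (Finset.mem_image_of_mem _ hyF)) with h | h
        · exact absurd (hg y hyF e he (h.trans he2.symm)) (Finset.ne_of_mem_erase hy)
        · exact h
      · exact Finset.insert_erase he
    · rintro ⟨⟨e, F'⟩, ⟨heA, hF'E, hg', hc', himg'⟩, rfl⟩
      have he2 : e.2 = i := (Finset.mem_filter.mp heA).2
      have heE : e ∈ E := (Finset.mem_filter.mp heA).1
      have heF' : e ∉ F' := by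
        intro h
        have : e.2 ∈ s := himg' (Finset.mem_image_of_mem _ h)
        rw [he2] at this
        exact his this
      refine ⟨⟨?_, ?_, ?_, ?_⟩, ?_⟩
      · exact Finset.insert_subset heE hF'E
      · intro x hx y hy hxy
        rcases Finset.mem_insert.mp hx with rfl | hx' <;>
          rcases Finset.mem_insert.mp hy with rfl | hy'
        · rfl
        · exfalso
          have : y.2 ∈ s := himg' (Finset.mem_image_of_mem _ hy')
          rw [← hxy, he2] at this
          exact his this
        · exfalso
          have : x.2 ∈ s := himg' (Finset.mem_image_of_mem _ hx')
          rw [hxy, he2] at this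
          exact his this
        · exact hg' x hx' y hy' hxy
      · rw [Finset.card_insert_of_notMem heF', hc']
      · rw [Finset.image_insert, he2]
        exact Finset.insert_subset_insert _ himg'
      · exact ⟨e, Finset.mem_insert_self _ _, he2⟩
  rw [h1, h2]
  have hinj : Set.InjOn (fun p : (Fin n × Fin n) × Finset (Fin n × Fin n) => insert p.1 p.2)
      (↑(A ×ˢ cnt E s m) : Set ((Fin n × Fin n) × Finset (Fin n × Fin n))) := by
    rintro ⟨e, F'⟩ hp ⟨f, G'⟩ hq hpq
    simp only at hpq
    simp only [Finset.mem_coe, Finset.mem_product, mem_cnt] at hp hq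
    obtain ⟨heA, hF'E, hgF, hcF, himgF⟩ := hp
    obtain ⟨hfA, hG'E, hgG, hcG, himgG⟩ := hq
    have he2 : e.2 = i := (Finset.mem_filter.mp heA).2
    have hf2 : f.2 = i := (Finset.mem_filter.mp hfA).2
    have hnotF' : ∀ x ∈ F', x.2 ≠ i := fun x hx h =>
      his (h ▸ himgF (Finset.mem_image_of_mem _ hx))
    have hnotG' : ∀ x ∈ G', x.2 ≠ i := fun x hx h =>
      his (h ▸ himgG (Finset.mem_image_of_mem _ hx))
    have hef : e = f := by
      have : e ∈ insert f G' := hpq ▸ Finset.mem_insert_self e F'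
      rcases Finset.mem_insert.mp this with h | h
      · exact h
      · exact absurd he2 (hnotG' e h)
    subst hef
    have : F' = G' := by
      ext x
      constructor
      · intro hx
        have : x ∈ insert e G' := hpq ▸ Finset.mem_insert_of_mem hx
        rcases Finset.mem_insert.mp this with rfl | h
        · exact absurd he2 (hnotF' x hx)
        · exact h
      · intro hx
        have : x ∈ insert e F' := hpq ▸ Finset.mem_insert_of_mem hx
        rcases Finset.mem_insert.mp this with rfl | h
        · exact absurd he2 (hnotG' x hx)
        · exact h
    rw [this]
  rw [Finset.card_image_of_injOn hinj, Finset.card_product]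
  ring

lemma cnt_card {n : ℕ} (E : Finset (Fin n × Fin n)) (s : Finset (Fin n)) (m : ℕ) :
    (cnt E s m).card = Asum (fun i => (E.filter fun e => e.2 = i).card) s m := by
  classical
  induction s using Finset.induction_on generalizing m with
  | empty =>
    match m with
    | 0 => rw [cnt_zero, Asum_zero]; simp
    | m + 1 =>
      rw [cnt_empty, Asum, Finset.powersetCard_eq_empty.mpr (by simp)]
      simp
  | @insert i s his IH =>
    match m with
    | 0 => rw [cnt_zero, Asum_zero]; simp
    | m + 1 =>
      rw [cnt_insert_card E his m, IH, IH]
      rw [Asum, Asum, Asum, Finset.powersetCard_succ_insert his]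
      rw [Finset.sum_union]
      · congr 1
        rw [Finset.sum_image]
        · rw [Finset.mul_sum]
          refine Finset.sum_congr rfl fun S hS => ?_
          have hiS : i ∉ S := fun h => his (Finset.mem_powersetCard.mp hS |>.1 h)
          rw [Finset.prod_insert hiS]
        · intro S hS T hT hST
          have hiS : i ∉ S := fun h => his (Finset.mem_powersetCard.mp hS |>.1 h)
          have hiT : i ∉ T := fun h => his (Finset.mem_powersetCard.mp hT |>.1 h)
          exact (Finset.insert_erase_invOn.2.injOn (by simpa using hiS) (by simpa using hiT)) hST
      · rw [Finset.disjoint_left]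
        intro S hS hS'
        obtain ⟨T, hT, rfl⟩ := Finset.mem_image.mp hS'
        exact (Finset.mem_powersetCard.mp hS |>.1 (Finset.mem_insert_self i T) : i ∈ s) |> his

section GraphLemmas
variable {n : ℕ} {F : Finset (Fin n × Fin n)}

lemma graphOf_adj {a b : Fin n} :
    (graphOf F).Adj a b ↔ a ≠ b ∧ ((a, b) ∈ F ∨ (b, a) ∈ F) := by
  simp [graphOf, SimpleGraph.fromRel_adj]

lemma adj_orient (hF : ∀ e ∈ F, e.1 < e.2) {a b : Fin n} (h : (graphOf F).Adj a b)
    (hab : a < b) : (a, b) ∈ F := by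
  rcases (graphOf_adj.mp h).2 with h' | h'
  · exact h'
  · exact absurd (hF _ h') (by simp; omega)

lemma adj_lt_or_gt (hF : ∀ e ∈ F, e.1 < e.2) {a b : Fin n} (h : (graphOf F).Adj a b) :
    a < b ∨ b < a := by
  have hne := (graphOf_adj.mp h).1
  rcases lt_or_gt_of_ne hne with h' | h'
  · exact Or.inl h'
  · exact Or.inr h'

end GraphLemmas

section Forest
variable {n : ℕ} {F : Finset (Fin n × Fin n)}

lemma chain_of_incoming (hF : ∀ e ∈ F, e.1 < e.2) (hg : GoodF F) :
    ∀ {a v : Fin n} (p : (graphOf F).Walk a v), p.IsPath →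
      ∀ u, (u, a) ∈ F → u ∉ p.support → List.Chain (· < ·) u p.support := by
  intro a v p
  induction p with
  | nil =>
    intro _ u hu _
    have := hF _ hu
    simp only [Walk.support_nil]
    exact List.Chain.cons this List.Chain.nil
  | @cons a b v h q ih =>
    intro hp u huF hus
    rw [Walk.support_cons]
    rw [Walk.cons_isPath_iff] at hp
    have hub : u < a := hF _ huF
    refine List.Chain.cons hub ?_
    have habF : (a, b) ∈ F := by
      rcases adj_lt_or_gt hF h with hlt | hlt
      · exact adj_orient hF h hlt
      · exfalso
        have hbaF : (b, a) ∈ F := adj_orient hF h.symm hlt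
        have := hg _ huF _ hbaF rfl
        have hub' : u = b := congrArg Prod.fst this
        apply hus
        rw [Walk.support_cons, hub']
        exact List.mem_cons_of_mem _ q.start_mem_support
    refine ih hp.1 a habF hp.2
end Forest

section Forest2
variable {n : ℕ} {F : Finset (Fin n × Fin n)}

lemma increasing_of_good (hF : ∀ e ∈ F, e.1 < e.2) (hg : GoodF F) : IsIncreasing F := by
  intro r v p hp hmin
  cases p with
  | nil => exact List.isChain_singleton _
  | @cons r b v h q =>
    rw [Walk.support_cons]
    rw [Walk.cons_isPath_iff] at hp
    have hrb : r < b := by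
      rcases adj_lt_or_gt hF h with hlt | hlt
      · exact hlt
      · exact absurd (hmin _ h.reachable) (by exact not_le.mpr hlt)
    have hrbF := adj_orient hF h hrb
    exact chain_of_incoming hF hg q hp.1 r hrbF hp.2
end Forest2

section Forest3
variable {n : ℕ} {F : Finset (Fin n × Fin n)}

lemma acyclic_of_good (hF : ∀ e ∈ F, e.1 < e.2) (hg : GoodF F) : (graphOf F).IsAcyclic := by
  intro v c hc
  classical
  have hne : c.support.toFinset.Nonempty := ⟨v, by simp⟩
  set m := c.support.toFinset.max' hne with hm_def
  have hm : m ∈ c.support := by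
    have := c.support.toFinset.max'_mem hne
    simpa using this
  have hle : ∀ x ∈ c.support, x ≤ m := fun x hx =>
    c.support.toFinset.le_max' x (by simpa using hx)
  have hc' := hc.rotate hm
  have hle' : ∀ x ∈ (c.rotate m hm).support, x ≤ m := by
    intro x hx
    rw [Walk.support_eq_cons] at hx
    rcases List.mem_cons.mp hx with rfl | hx
    · exact le_refl _
    · exact hle x (List.mem_of_mem_tail ((c.support_rotate m hm).mem_iff.mp hx))
  revert hc' hle'
  generalize c.rotate m hm = c'
  intro hc' hle'
  cases c' with
  | nil => exact hc'.not_of_nil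
  | @cons m b v h q =>
    rw [Walk.cons_isCycle_iff] at hc'
    obtain ⟨hqp, hedge⟩ := hc'
    have hbm : b < m := by
      have hb : b ≤ m := hle' b (by rw [Walk.support_cons]; exact List.mem_cons_of_mem _ q.start_mem_support)
      exact lt_of_le_of_ne hb h.ne'
    have hbmF : (b, m) ∈ F := adj_orient hF h.symm hbm
    obtain ⟨a, hma, t, hqe⟩ := Walk.exists_eq_cons_of_ne (hbm.ne' : m ≠ b) q.reverse
    have haq : a ∈ q.support := by
      have : a ∈ q.reverse.support := by
        rw [hqe, Walk.support_cons]
        exact List.mem_cons_of_mem _ t.start_mem_support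
      rwa [Walk.support_reverse, List.mem_reverse] at this
    have ham : a < m := by
      have : a ≤ m := hle' a (by rw [Walk.support_cons]; exact List.mem_cons_of_mem _ haq)
      exact lt_of_le_of_ne this hma.ne'
    have hamF : (a, m) ∈ F := adj_orient hF hma.symm ham
    have hab : a = b := congrArg Prod.fst (hg _ hamF _ hbmF rfl)
    apply hedge
    have : s(m, a) ∈ q.reverse.edges := by
      rw [hqe, Walk.edges_cons]
      exact List.mem_cons_self
    rw [Walk.edges_reverse, List.mem_reverse] at this
    rwa [hab] at this
end Forest3

section Forest4
variable {n : ℕ} {F : Finset (Fin n × Fin n)}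

lemma edge_end_unique : ∀ {u v : Fin n} (p : (graphOf F).Walk u v),
    List.Pairwise (· < ·) p.support →
    ∀ x y, s(x, v) ∈ p.edges → s(y, v) ∈ p.edges → x = y := by
  intro u v p
  induction p with
  | nil => intro _ x y hx _; simp at hx
  | @cons u b v h q ih =>
    intro hpw x y hx hy
    rw [Walk.support_cons, List.pairwise_cons] at hpw
    obtain ⟨hu, hq⟩ := hpw
    rw [Walk.edges_cons, List.mem_cons] at hx hy
    have hfe : ∀ z, s(z, v) = s(u, b) → z = u ∧ v = b := by
      intro z hz
      rw [Sym2.eq_iff] at hz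
      rcases hz with ⟨rfl, rfl⟩ | ⟨rfl, hvu⟩
      · exact ⟨rfl, rfl⟩
      · exact absurd (hu v q.end_mem_support) (by rw [hvu]; exact lt_irrefl u)
    have hqnil : v = b → q.edges = [] := by
      intro hvb
      cases q with
      | nil => simp
      | @cons b c v h' q' =>
        exfalso
        rw [Walk.support_cons, List.pairwise_cons] at hq
        exact absurd (hq.1 v q'.end_mem_support) (by rw [hvb]; exact lt_irrefl b)
    rcases hx with hx1 | hx2
    · obtain ⟨rfl, hvb⟩ := hfe x hx1
      rcases hy with hy1 | hy2
      · exact (hfe y hy1).1.symm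
      · rw [hqnil hvb] at hy2; simp at hy2
    · rcases hy with hy1 | hy2
      · obtain ⟨rfl, hvb⟩ := hfe y hy1
        rw [hqnil hvb] at hx2; simp at hx2
      · exact ih hq x y hx2 hy2

lemma good_of_isf {E : Finset (Fin n × Fin n)} (hE : ∀ e ∈ E, e.1 < e.2)
    (h : IsISF E F) : GoodF F := by
  classical
  obtain ⟨hFE, hac, hinc⟩ := h
  have hF : ∀ e ∈ F, e.1 < e.2 := fun e he => hE e (hFE he)
  intro e he e' he' h2
  by_contra hne
  have hne1 : e.1 ≠ e'.1 := fun h1 => hne (Prod.ext h1 h2)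
  set i := e.2 with hi_def
  set S := Finset.univ.filter (fun w => (graphOf F).Reachable w i) with hS_def
  have hSne : S.Nonempty :=
    ⟨i, by
      simp only [hS_def, Finset.mem_filter, Finset.mem_univ, true_and]
      exact Reachable.refl i⟩
  set r := S.min' hSne with hr_def
  have hrS : r ∈ S := S.min'_mem hSne
  have hri : (graphOf F).Reachable r i := by
    rw [hS_def] at hrS; simpa using hrS
  have hmin : IsCompMin F r := by
    intro w hw
    refine S.min'_le w ?_
    rw [hS_def]
    simp only [Finset.mem_filter, Finset.mem_univ, true_and]
    exact hw.symm.trans hri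
  obtain ⟨p0⟩ := hri
  set p := p0.bypass with hp_def
  have hp : p.IsPath := p0.bypass_isPath
  have hchain : List.Chain' (· < ·) p.support := hinc r i p hp hmin
  have hpw : List.Pairwise (· < ·) p.support := List.isChain_iff_pairwise.mp hchain
  have key : ∀ x, (x, i) ∈ F → s(x, i) ∈ p.edges := by
    intro x hxF
    have hxi : x < i := hF _ hxF
    have hadj : (graphOf F).Adj i x := graphOf_adj.mpr ⟨hxi.ne', Or.inr hxF⟩
    by_cases hxs : x ∈ p.support
    · have hdp : (p.dropUntil x hxs).IsPath := hp.dropUntil hxs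
      have hnc : ¬ (Walk.cons hadj (p.dropUntil x hxs)).IsCycle := hac _
      rw [Walk.cons_isCycle_iff] at hnc
      push_neg at hnc
      have h3 := Walk.edges_dropUntil_subset p hxs (hnc hdp)
      rwa [Sym2.eq_swap] at h3
    · exfalso
      have hpc : (p.concat hadj).IsPath := by
        have h1 : (Walk.cons hadj.symm p.reverse).IsPath := by
          rw [Walk.cons_isPath_iff]
          exact ⟨hp.reverse, by rwa [Walk.support_reverse, List.mem_reverse]⟩
        have h2' := h1.reverse
        rwa [Walk.reverse_cons, Walk.reverse_reverse] at h2'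
      have hchain2 := hinc r x _ hpc hmin
      have hpw2 := List.isChain_iff_pairwise.mp hchain2
      rw [Walk.support_concat] at hpw2
      have : i < x := by
        have hilast : i ∈ p.support := p.end_mem_support
        have := List.pairwise_append.mp (by simpa [List.concat_eq_append] using hpw2)
        exact this.2.2 i hilast x (List.mem_singleton_self x)
      omega
  have h1 := key e.1 (by simpa using he)
  have he'' : (e'.1, e'.2) ∈ F := by simpa using he'
  rw [← h2] at he''
  have h2' := key e'.1 he''
  exact hne1 (edge_end_unique p hpw e.1 e'.1 h1 h2')

end Forest4

section Root
variable {n : ℕ}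

noncomputable def rootOf (F : Finset (Fin n × Fin n)) (hF : ∀ e ∈ F, e.1 < e.2) (i : Fin n) : Fin n :=
  if h : ∃ e, e ∈ F ∧ e.2 = i then
    rootOf F hF h.choose.1
  else i
termination_by i.1
decreasing_by
  have h1 := h.choose_spec.1
  have h2 := h.choose_spec.2
  have h3 := hF _ h1
  rw [h2] at h3
  exact h3

variable {F : Finset (Fin n × Fin n)} (hF : ∀ e ∈ F, e.1 < e.2)

lemma rootOf_spec (i : Fin n) :
    (¬∃ e, e ∈ F ∧ e.2 = rootOf F hF i) ∧ (graphOf F).Reachable i (rootOf F hF i) := by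
  have key : ∀ k, ∀ i : Fin n, i.1 < k →
      (¬∃ e, e ∈ F ∧ e.2 = rootOf F hF i) ∧ (graphOf F).Reachable i (rootOf F hF i) := by
    intro k
    induction k with
    | zero => intro i hi; omega
    | succ k ih =>
      intro i hi
      rw [rootOf.eq_def]
      split
      · rename_i h
        have h1 := h.choose_spec.1
        have h2 := h.choose_spec.2
        have h3 := hF _ h1
        rw [h2] at h3
        have := ih h.choose.1 (by omega)
        refine ⟨this.1, ?_⟩
        have hmem : (h.choose.1, i) ∈ F := by
          have hc : (h.choose.1, h.choose.2) ∈ F := by simpa using h1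
          rwa [h2] at hc
        have hadj : (graphOf F).Adj h.choose.1 i :=
          graphOf_adj.mpr ⟨h3.ne, Or.inl hmem⟩
        exact (hadj.reachable.symm).trans this.2
      · rename_i h
        exact ⟨h, Reachable.refl i⟩
  exact key (i.1 + 1) i (by omega)

end Root

section Root2
variable {n : ℕ} {F : Finset (Fin n × Fin n)} (hF : ∀ e ∈ F, e.1 < e.2)

lemma rootOf_eq_self (i : Fin n) (h : ¬∃ e, e ∈ F ∧ e.2 = i) : rootOf F hF i = i := by
  rw [rootOf.eq_def, dif_neg h]

lemma rootOf_of_mem (hg : GoodF F) {a b : Fin n} (hab : (a, b) ∈ F) :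
    rootOf F hF b = rootOf F hF a := by
  conv_lhs => rw [rootOf.eq_def]
  have h : ∃ e, e ∈ F ∧ e.2 = b := ⟨(a, b), hab, rfl⟩
  rw [dif_pos h]
  congr 1
  exact congrArg Prod.fst (hg _ h.choose_spec.1 _ hab (by rw [h.choose_spec.2]))

lemma rootOf_eq_of_adj (hg : GoodF F) {a b : Fin n} (h : (graphOf F).Adj a b) :
    rootOf F hF a = rootOf F hF b := by
  rcases (graphOf_adj.mp h).2 with h' | h'
  · exact (rootOf_of_mem hF hg h').symm
  · exact rootOf_of_mem hF hg h'

lemma rootOf_eq_of_reachable (hg : GoodF F) {a b : Fin n}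
    (h : (graphOf F).Reachable a b) : rootOf F hF a = rootOf F hF b := by
  obtain ⟨w⟩ := h
  induction w with
  | nil => rfl
  | cons hadj w' ih => exact (rootOf_eq_of_adj hF hg hadj).trans ih

lemma numComp_eq (hF : ∀ e ∈ F, e.1 < e.2) (hg : GoodF F) :
    Nat.card (graphOf F).ConnectedComponent = n - F.card := by
  classical
  set R := Finset.univ.filter (fun i : Fin n => ¬∃ e, e ∈ F ∧ e.2 = i) with hR_def
  have hmemR : ∀ i : Fin n, rootOf F hF i ∈ R := by
    intro i
    rw [hR_def]
    simp only [Finset.mem_filter, Finset.mem_univ, true_and]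
    exact (rootOf_spec hF i).1
  have hequiv : (graphOf F).ConnectedComponent ≃ {x // x ∈ R} := by
    refine ⟨ConnectedComponent.lift (fun v => ⟨rootOf F hF v, hmemR v⟩) ?_,
      fun x => (graphOf F).connectedComponentMk x.1, ?_, ?_⟩
    · intro v w p _
      exact Subtype.ext (rootOf_eq_of_reachable hF hg p.reachable)
    · intro c
      refine ConnectedComponent.ind (fun v => ?_) c
      simp only [ConnectedComponent.lift_mk]
      exact (ConnectedComponent.sound (rootOf_spec hF v).2).symm
    · intro x
      simp only [ConnectedComponent.lift_mk]
      refine Subtype.ext ?_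
      refine rootOf_eq_self hF x.1 ?_
      have h2 : (x : Fin n) ∈ Finset.univ.filter (fun i : Fin n => ¬∃ e, e ∈ F ∧ e.2 = i) := x.2
      simpa using h2
  rw [Nat.card_congr hequiv]
  have hcard : Nat.card {x // x ∈ R} = R.card := Nat.card_eq_finsetCard R
  rw [hcard]
  have hR : R = Finset.univ \ F.image Prod.snd := by
    ext i
    rw [hR_def]
    simp only [Finset.mem_filter, Finset.mem_univ, true_and, Finset.mem_sdiff,
      Finset.mem_image]
  rw [hR, Finset.card_sdiff_of_subset (Finset.subset_univ _)]
  rw [Finset.card_image_of_injOn (fun x hx y hy hxy => hg x hx y hy hxy)]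
  simp

end Root2


section Glue
variable {n : ℕ}

lemma IFk_eq_cnt (E : Finset (Fin n × Fin n)) (hE : ∀ e ∈ E, e.1 < e.2) (k : ℕ) (hk : k ≤ n) :
    IFk E k = ↑(cnt E Finset.univ (n - k)) := by
  ext F
  simp only [IFk, Set.mem_setOf_eq, Finset.mem_coe, mem_cnt]
  constructor
  · rintro ⟨⟨hFE, hac, hinc⟩, hnum⟩
    have hF : ∀ e ∈ F, e.1 < e.2 := fun e he => hE e (hFE he)
    have hg : GoodF F := good_of_isf hE ⟨hFE, hac, hinc⟩
    have hnc : numComp F = n - F.card := numComp_eq hF hg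
    have hcardle : F.card ≤ n := by
      calc F.card = (F.image Prod.snd).card :=
            (Finset.card_image_of_injOn (fun x hx y hy hxy => hg x hx y hy hxy)).symm
        _ ≤ Fintype.card (Fin n) := by
            simpa using Finset.card_le_univ (F.image Prod.snd)
        _ = n := by simp
    exact ⟨hFE, hg, by omega, Finset.subset_univ _⟩
  · rintro ⟨hFE, hg, hcard, -⟩
    have hF : ∀ e ∈ F, e.1 < e.2 := fun e he => hE e (hFE he)
    refine ⟨⟨hFE, acyclic_of_good hF hg, increasing_of_good hF hg⟩, ?_⟩
    have hnc : numComp F = n - F.card := numComp_eq hF hg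
    omega

lemma natCard_IFk (E : Finset (Fin n × Fin n)) (hE : ∀ e ∈ E, e.1 < e.2) (k : ℕ) (hk : k ≤ n) :
    Nat.card (IFk E k)
      = Asum (fun i => (E.filter fun e => e.2 = i).card) Finset.univ (n - k) := by
  rw [IFk_eq_cnt E hE k hk, Nat.card_coe_set_eq, Set.ncard_coe_finset, cnt_card]

end Glue

/-- Strong log-concavity of the numbers of increasing spanning forests
of a finite simple graph on `[n]` with a given number of components. -/
theorem card_isf_strongly_log_concave (n : ℕ) (hn : 1 ≤ n)
    (E : Finset (Fin n × Fin n)) (hE : ∀ e ∈ E, e.1 < e.2)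
    (p q : ℕ) (hp : 0 < p) (hpq : p ≤ q) (hq : q < n) :
    Nat.card (IFk E p) * Nat.card (IFk E q) ≥
      Nat.card (IFk E (p - 1)) * Nat.card (IFk E (q + 1)) := by
  have hpn : p ≤ n := by omega
  have hqn : q ≤ n := by omega
  have hp1n : p - 1 ≤ n := by omega
  have hq1n : q + 1 ≤ n := by omega
  rw [natCard_IFk E hE p hpn, natCard_IFk E hE q hqn, natCard_IFk E hE (p - 1) hp1n,
    natCard_IFk E hE (q + 1) hq1n]
  set d : Fin n → ℕ := fun i => (E.filter fun e => e.2 = i).card with hd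
  have key := Asum_lc d Finset.univ (n - q - 1) (n - p - 1) (by omega)
  have e1 : n - (q + 1) = n - q - 1 := by omega
  have e2 : n - (p - 1) = (n - p - 1) + 2 := by omega
  have e3 : n - q = (n - q - 1) + 1 := by omega
  have e4 : n - p = (n - p - 1) + 1 := by omega
  rw [e1, e2, e3, e4]
  refine le_trans (le_of_eq (mul_comm _ _)) (le_trans key (le_of_eq (mul_comm _ _)))
end

section
/- Let G be a finite simple graph on vertex set [n]. For all k, ℓ with 0 ≤ k < ℓ ≤ n, there exists an injective map Ψ : IF_k × IF_ℓ → IF_{k+1} × IF_{ℓ−1} that is local, i.e., for every pair (A, B) ∈ IF_k × IF_ℓ there exists an edge e ∈ A \ B such that Ψ(A, B) = (A \ {e}, B ∪ {e}). -/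
open SimpleGraph

namespace ISFAux
open Finset SimpleGraph Walk

variable {n : ℕ}

/-- prefix balance function -/
def dBal (X Y : Finset (Fin n)) (i : ℕ) : ℤ :=
  ((X.filter (fun x => x.val < i)).card : ℤ) - ((Y.filter (fun x => x.val < i)).card : ℤ)

lemma card_filter_succ (X : Finset (Fin n)) (i : ℕ) (h : i < n) :
    ((X.filter (fun x => x.val < i + 1)).card : ℤ) =
      ((X.filter (fun x => x.val < i)).card : ℤ) + (if (⟨i, h⟩ : Fin n) ∈ X then 1 else 0) := by
  classical
  have hsplit : X.filter (fun x => x.val < i + 1)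
      = (X.filter (fun x => x.val < i)) ∪ (X.filter (fun x => x = (⟨i, h⟩ : Fin n))) := by
    ext x
    simp only [mem_filter, mem_union, Fin.ext_iff]
    constructor
    · rintro ⟨hx, hlt⟩
      rcases Nat.lt_succ_iff_lt_or_eq.mp hlt with h' | h'
      · exact Or.inl ⟨hx, h'⟩
      · exact Or.inr ⟨hx, h'⟩
    · rintro (⟨hx, hlt⟩ | ⟨hx, heq⟩)
      · exact ⟨hx, Nat.lt_succ_of_lt hlt⟩
      · exact ⟨hx, by omega⟩
  have hdisj : Disjoint (X.filter (fun x => x.val < i)) (X.filter (fun x => x = (⟨i, h⟩ : Fin n))) := by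
    simp only [Finset.disjoint_left, mem_filter]
    rintro a ⟨_, hlt⟩ ⟨_, rfl⟩
    simp at hlt
  rw [hsplit, card_union_of_disjoint hdisj]
  have : (X.filter (fun x => x = (⟨i, h⟩ : Fin n))).card = if (⟨i, h⟩ : Fin n) ∈ X then 1 else 0 := by
    by_cases hv : (⟨i, h⟩ : Fin n) ∈ X <;> simp [filter_eq', hv]
  rw [this]
  push_cast
  split <;> ring

lemma dBal_zero (X Y : Finset (Fin n)) : dBal X Y 0 = 0 := by simp [dBal]

lemma dBal_ge (X Y : Finset (Fin n)) (i : ℕ) (h : n ≤ i) :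
    dBal X Y i = (X.card : ℤ) - Y.card := by
  have hX : X.filter (fun x => x.val < i) = X := by
    apply filter_true_of_mem; intro x _; exact lt_of_lt_of_le x.isLt h
  have hY : Y.filter (fun x => x.val < i) = Y := by
    apply filter_true_of_mem; intro x _; exact lt_of_lt_of_le x.isLt h
  simp [dBal, hX, hY]

lemma dBal_succ (X Y : Finset (Fin n)) (i : ℕ) (h : i < n) :
    dBal X Y (i + 1) = dBal X Y i
      + (if (⟨i, h⟩ : Fin n) ∈ X then 1 else 0) - (if (⟨i, h⟩ : Fin n) ∈ Y then 1 else 0) := by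
  unfold dBal
  rw [card_filter_succ X i h, card_filter_succ Y i h]
  ring

noncomputable def argminSet (X Y : Finset (Fin n)) : Finset ℕ :=
  @Finset.filter _ (fun i => ∀ j ∈ range (n + 1), dBal X Y i ≤ dBal X Y j)
    (Classical.decPred _) (range (n + 1))

lemma argminSet_nonempty (X Y : Finset (Fin n)) : (argminSet X Y).Nonempty := by
  classical
  obtain ⟨i, hi, hmin⟩ := exists_min_image (range (n + 1)) (dBal X Y)
    ⟨0, by simp⟩
  refine ⟨i, ?_⟩
  rw [argminSet, @mem_filter _ _ (Classical.decPred _)]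
  exact ⟨hi, hmin⟩

noncomputable def cIdx (X Y : Finset (Fin n)) : ℕ := (argminSet X Y).max' (argminSet_nonempty X Y)
noncomputable def rIdx (X Y : Finset (Fin n)) : ℕ := (argminSet X Y).min' (argminSet_nonempty X Y)

lemma dBal_erase_insert (X Y : Finset (Fin n)) (v : Fin n) (hvX : v ∈ X) (hvY : v ∉ Y) (i : ℕ) :
    dBal (X.erase v) (insert v Y) i = dBal X Y i - (if v.val < i then 2 else 0) := by
  classical
  have hX : ((X.erase v).filter (fun x => x.val < i)).card
      = (X.filter (fun x => x.val < i)).card - (if v.val < i then 1 else 0) := by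
    rw [filter_erase]
    split
    · rw [card_erase_of_mem (by simp [mem_filter, hvX, *])]
    · rw [erase_eq_of_notMem (by simp [mem_filter, *]), Nat.sub_zero]
  have hY : ((insert v Y).filter (fun x => x.val < i)).card
      = (Y.filter (fun x => x.val < i)).card + (if v.val < i then 1 else 0) := by
    rw [filter_insert]
    split
    · rw [card_insert_of_notMem (by simp [mem_filter, hvY])]
    · simp
  have hle : (if v.val < i then 1 else 0) ≤ (X.filter (fun x => x.val < i)).card := by
    split
    · exact card_pos.mpr ⟨v, by simp [mem_filter, hvX, *]⟩
    · exact Nat.zero_le _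
  unfold dBal
  rw [hX, hY]
  push_cast [hle]
  split <;> push_cast <;> ring

/-- The core combinatorial lemma: the chosen vertex and its recoverability. -/
lemma core (X Y : Finset (Fin n)) (hc : Y.card < X.card) :
    ∃ h : cIdx X Y < n,
      (⟨cIdx X Y, h⟩ : Fin n) ∈ X ∧ (⟨cIdx X Y, h⟩ : Fin n) ∉ Y ∧
      rIdx (X.erase ⟨cIdx X Y, h⟩) (insert (⟨cIdx X Y, h⟩ : Fin n) Y) = cIdx X Y + 1 := by
  classical
  have hmax : (argminSet X Y).max' (argminSet_nonempty X Y) = cIdx X Y := rfl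
  have hj0mem : cIdx X Y ∈ argminSet X Y := max'_mem _ _
  rw [argminSet, @mem_filter _ _ (Classical.decPred _)] at hj0mem
  obtain ⟨hj0r, hj0min⟩ := hj0mem
  have hj0n : cIdx X Y < n + 1 := by simpa using hj0r
  have hm0 : dBal X Y (cIdx X Y) ≤ 0 := by
    have := hj0min 0 (by simp)
    simpa [dBal_zero] using this
  have hdn : 0 < dBal X Y n := by
    rw [dBal_ge X Y n le_rfl]
    have : (Y.card : ℤ) < X.card := by exact_mod_cast hc
    linarith
  have hj0ltn : cIdx X Y < n := by
    rcases Nat.lt_or_ge (cIdx X Y) n with h | h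
    · exact h
    · exfalso
      have heq : cIdx X Y = n := by omega
      rw [heq] at hm0
      omega
  refine ⟨hj0ltn, ?_⟩
  have hnotmem : ∀ j ∈ range (n + 1), cIdx X Y < j → j ∉ argminSet X Y := by
    intro j hj hjgt hmem
    have := le_max' _ j hmem
    rw [hmax] at this
    omega
  have hgt : ∀ j ∈ range (n + 1), cIdx X Y < j → dBal X Y (cIdx X Y) < dBal X Y j := by
    intro j hj hjgt
    rcases lt_or_eq_of_le (hj0min j hj) with h | h
    · exact h
    · exfalso
      refine hnotmem j hj hjgt ?_
      rw [argminSet, @mem_filter _ _ (Classical.decPred _)]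
      exact ⟨hj, fun j' hj' => h ▸ hj0min j' hj'⟩
  have hsucc_gt : dBal X Y (cIdx X Y) < dBal X Y (cIdx X Y + 1) :=
    hgt (cIdx X Y + 1) (by simp; omega) (Nat.lt_succ_self _)
  have hstep := dBal_succ X Y (cIdx X Y) hj0ltn
  have hvX : (⟨cIdx X Y, hj0ltn⟩ : Fin n) ∈ X := by
    by_contra hvX
    rw [hstep, if_neg hvX] at hsucc_gt
    split at hsucc_gt <;> omega
  have hvY : (⟨cIdx X Y, hj0ltn⟩ : Fin n) ∉ Y := by
    intro hvY
    rw [hstep, if_pos hvX, if_pos hvY] at hsucc_gt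
    omega
  have hsucc_eq : dBal X Y (cIdx X Y + 1) = dBal X Y (cIdx X Y) + 1 := by
    rw [hstep, if_pos hvX, if_neg hvY]
    ring
  refine ⟨hvX, hvY, ?_⟩
  set v : Fin n := ⟨cIdx X Y, hj0ltn⟩ with hvdef
  have hd' : ∀ i : ℕ, dBal (X.erase v) (insert v Y) i
      = dBal X Y i - (if cIdx X Y < i then 2 else 0) := by
    intro i
    have := dBal_erase_insert X Y v hvX hvY i
    simpa using this
  have hnew_min : ∀ j ∈ range (n + 1),
      dBal (X.erase v) (insert v Y) (cIdx X Y + 1) ≤ dBal (X.erase v) (insert v Y) j := by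
    intro j hj
    rw [hd', hd', hsucc_eq, if_pos (Nat.lt_succ_self _)]
    rcases Nat.lt_or_ge (cIdx X Y) j with h | h
    · rw [if_pos h]
      have := hgt j hj h
      omega
    · rw [if_neg (by omega)]
      have := hj0min j hj
      omega
  have hmem' : cIdx X Y + 1 ∈ argminSet (X.erase v) (insert v Y) := by
    rw [argminSet, @mem_filter _ _ (Classical.decPred _)]
    exact ⟨by simp; omega, hnew_min⟩
  have hub : rIdx (X.erase v) (insert v Y) ≤ cIdx X Y + 1 := min'_le _ _ hmem'
  have hlb : cIdx X Y + 1 ≤ rIdx (X.erase v) (insert v Y) := by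
    by_contra hlt
    push_neg at hlt
    have hrmem : rIdx (X.erase v) (insert v Y) ∈ argminSet (X.erase v) (insert v Y) :=
      min'_mem _ _
    rw [argminSet, @mem_filter _ _ (Classical.decPred _)] at hrmem
    obtain ⟨hrr, hrmin⟩ := hrmem
    have h1 := hrmin (cIdx X Y + 1) (by simp; omega)
    rw [hd', hd', hsucc_eq, if_pos (Nat.lt_succ_self _), if_neg (by omega)] at h1
    have h2 := hj0min (rIdx (X.erase v) (insert v Y)) (by simp at hrr ⊢; omega)
    omega
  omega


/-- unique parent property -/
def UP (F : Finset (Fin n × Fin n)) : Prop :=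
  ∀ e ∈ F, ∀ f ∈ F, e.2 = f.2 → e = f

/-- support: vertices having a parent -/
def Supp (F : Finset (Fin n × Fin n)) : Finset (Fin n) := F.image Prod.snd

lemma UP_subset {F F' : Finset (Fin n × Fin n)} (h : F' ⊆ F) (hUP : UP F) : UP F' :=
  fun e he f hf hef => hUP e (h he) f (h hf) hef

lemma adj_iff {F : Finset (Fin n × Fin n)} {a b : Fin n} :
    (graphOf F).Adj a b ↔ a ≠ b ∧ ((a, b) ∈ F ∨ (b, a) ∈ F) :=
  SimpleGraph.fromRel_adj _ a b

lemma adj_of_mem {F : Finset (Fin n × Fin n)} (hF : ∀ e ∈ F, e.1 < e.2) {a b : Fin n}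
    (h : (a, b) ∈ F) : (graphOf F).Adj a b :=
  adj_iff.mpr ⟨ne_of_lt (hF _ h), Or.inl h⟩

lemma mem_of_adj {F : Finset (Fin n × Fin n)} (hF : ∀ e ∈ F, e.1 < e.2) {a b : Fin n}
    (h : (graphOf F).Adj a b) (hab : a < b) : (a, b) ∈ F := by
  rcases adj_iff.mp h with ⟨-, h1 | h2⟩
  · exact h1
  · exact absurd (hF _ h2) (by simp; omega)

lemma mem_supp_iff {F : Finset (Fin n × Fin n)} {v : Fin n} :
    v ∈ Supp F ↔ ∃ u, (u, v) ∈ F := by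
  constructor
  · intro h
    obtain ⟨e, he, hev⟩ := Finset.mem_image.mp h
    exact ⟨e.1, by rwa [show (e.1, v) = e by rw [← hev]]⟩
  · rintro ⟨u, hu⟩
    exact Finset.mem_image.mpr ⟨(u, v), hu, rfl⟩

/-- main chain lemma -/
lemma chain_aux {F : Finset (Fin n × Fin n)} (hF : ∀ e ∈ F, e.1 < e.2) (hUP : UP F)
    {u v : Fin n} (p : (graphOf F).Walk u v) (hp : p.IsPath)
    (H : ∀ w, (graphOf F).Adj u w → w ∈ p.support → u < w) :
    List.Chain' (· < ·) p.support := by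
  induction p with
  | nil => exact List.isChain_singleton _
  | @cons u x v h q ih =>
    rw [Walk.cons_isPath_iff] at hp
    have hux : u < x := H x h (by simp)
    have H' : ∀ w, (graphOf F).Adj x w → w ∈ q.support → x < w := by
      intro w hadj hw
      have hwx : w ≠ x := hadj.ne'
      rcases lt_trichotomy w x with hlt | heq | hgt
      · exfalso
        have h1 : (w, x) ∈ F := mem_of_adj hF hadj.symm hlt
        have h2 : (u, x) ∈ F := mem_of_adj hF h hux
        have := hUP _ h1 _ h2 rfl
        have : w = u := by simpa [Prod.ext_iff] using this
        exact hp.2 (this ▸ hw)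
      · exact absurd heq hwx
      · exact hgt
    have hchain := ih hp.1 H'
    rw [q.support_eq_cons] at hchain
    rw [Walk.support_cons, q.support_eq_cons]
    exact List.isChain_cons_cons.mpr ⟨hux, hchain⟩

lemma increasing_of_UP {F : Finset (Fin n × Fin n)} (hF : ∀ e ∈ F, e.1 < e.2) (hUP : UP F) :
    IsIncreasing F := by
  intro r v p hp hmin
  exact chain_aux hF hUP p hp fun w hadj _ =>
    lt_of_le_of_ne (hmin w hadj.reachable) hadj.ne

lemma le_getLast {l : List (Fin n)} (hl : l ≠ []) (h : List.Pairwise (· < ·) l) :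
    ∀ x ∈ l, x ≤ l.getLast hl := by
  induction l with
  | nil => simp
  | cons a t ih =>
    intro x hx
    rcases List.mem_cons.mp hx with rfl | hxt
    · rcases eq_or_ne t [] with rfl | ht
      · simp
      · rw [List.getLast_cons ht]
        have := List.pairwise_cons.mp h
        exact le_of_lt (this.1 _ (List.getLast_mem ht))
    · have ht : t ≠ [] := List.ne_nil_of_mem hxt
      rw [List.getLast_cons ht]
      exact ih ht (List.pairwise_cons.mp h).2 x hxt

lemma le_end_of_chain {F : Finset (Fin n × Fin n)} {u v : Fin n} (p : (graphOf F).Walk u v)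
    (hchain : List.Chain' (· < ·) p.support) : ∀ x ∈ p.support, x ≤ v := by
  intro x hx
  have hpair := List.isChain_iff_pairwise.mp hchain
  have := le_getLast (p.support_ne_nil) hpair x hx
  rwa [p.getLast_support] at this

/-- every vertex reaches a root -/
lemma exists_root {F : Finset (Fin n × Fin n)} (hF : ∀ e ∈ F, e.1 < e.2) (v : Fin n) :
    ∃ r, r ∉ Supp F ∧ (graphOf F).Reachable r v := by
  have : ∀ m : ℕ, ∀ v : Fin n, (v : ℕ) < m → ∃ r, r ∉ Supp F ∧ (graphOf F).Reachable r v := by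
    intro m
    induction m with
    | zero => intro v hv; omega
    | succ m ih =>
      intro v hv
      by_cases hvS : v ∈ Supp F
      · obtain ⟨u, hu⟩ := mem_supp_iff.mp hvS
        have huv : u < v := hF _ hu
        obtain ⟨r, hr, hre⟩ := ih u (by omega)
        exact ⟨r, hr, hre.trans (adj_of_mem hF hu).reachable⟩
      · exact ⟨v, hvS, Reachable.refl v⟩
  exact this n v v.isLt

/-- two roots in the same component are equal -/
lemma root_unique {F : Finset (Fin n × Fin n)} (hF : ∀ e ∈ F, e.1 < e.2) (hUP : UP F)
    {r₁ r₂ : Fin n} (h₁ : r₁ ∉ Supp F) (h₂ : r₂ ∉ Supp F)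
    (h : (graphOf F).Reachable r₁ r₂) : r₁ = r₂ := by
  by_contra hne
  obtain ⟨w⟩ := h
  set p : (graphOf F).Walk r₁ r₂ := w.toPath.1 with hpdef
  have hp : p.IsPath := w.toPath.2
  have hchain : List.Chain' (· < ·) p.support := by
    apply chain_aux hF hUP p hp
    intro x hadj _
    rcases adj_iff.mp hadj with ⟨hne', h1 | h2⟩
    · exact hF _ h1
    · exact absurd (mem_supp_iff.mpr ⟨x, h2⟩) h₁
  have hle := le_end_of_chain p hchain
  -- last edge of p gives a parent of r₂
  have hnn : ¬ p.reverse.Nil := Walk.not_nil_of_ne (Ne.symm hne)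
  obtain ⟨x, h', q, hq⟩ := Walk.not_nil_iff.mp hnn
  have hx : x ∈ p.support := by
    have : x ∈ p.reverse.support := by rw [hq]; simp
    rwa [Walk.support_reverse, List.mem_reverse] at this
  have hxr : x < r₂ := lt_of_le_of_ne (hle x hx) h'.ne'
  exact h₂ (mem_supp_iff.mpr ⟨x, mem_of_adj hF h'.symm hxr⟩)

lemma card_supp {F : Finset (Fin n × Fin n)} (hUP : UP F) : (Supp F).card = F.card :=
  Finset.card_image_of_injOn fun e he f hf hef => hUP e he f hf hef

lemma numComp_eq {F : Finset (Fin n × Fin n)} (hF : ∀ e ∈ F, e.1 < e.2) (hUP : UP F) :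
    numComp F = n - (Supp F).card := by
  classical
  set f : {r : Fin n // r ∉ Supp F} → (graphOf F).ConnectedComponent :=
    fun r => (graphOf F).connectedComponentMk r.1 with hfdef
  have hbij : Function.Bijective f := by
    constructor
    · rintro ⟨a, ha⟩ ⟨b, hb⟩ hab
      have : (graphOf F).Reachable a b := SimpleGraph.ConnectedComponent.exact hab
      exact Subtype.ext (root_unique hF hUP ha hb this)
    · intro c
      induction c using SimpleGraph.ConnectedComponent.ind with
      | _ v =>
        obtain ⟨r, hr, hre⟩ := exists_root hF v
        exact ⟨⟨r, hr⟩, SimpleGraph.ConnectedComponent.sound hre⟩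
  have h1 : numComp F = Nat.card {r : Fin n // r ∉ Supp F} :=
    (Nat.card_eq_of_bijective f hbij).symm
  rw [h1, Nat.card_eq_fintype_card, Fintype.card_subtype]
  have : Finset.filter (fun r : Fin n => r ∉ Supp F) Finset.univ = (Supp F)ᶜ := by
    ext x; simp
  rw [this, Finset.card_compl, Fintype.card_fin]

/-- unique parent implies acyclicity -/
lemma acyclic_of_UP {F : Finset (Fin n × Fin n)} (hF : ∀ e ∈ F, e.1 < e.2) (hUP : UP F) :
    (graphOf F).IsAcyclic := by
  classical
  intro v0 c0 hc0
  -- take the max vertex on the cycle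
  have hne : c0.support.toFinset.Nonempty := ⟨v0, by simp⟩
  set m := c0.support.toFinset.max' hne with hmdef
  have hmmem : m ∈ c0.support := by
    have := c0.support.toFinset.max'_mem hne
    simpa using this
  set c := c0.rotate m hmmem with hcdef
  have hc : c.IsCycle := hc0.rotate hmmem
  have hsub : ∀ x ∈ c.support, x ≤ m := by
    intro x hx
    rw [c.support_eq_cons] at hx
    rcases List.mem_cons.mp hx with h1 | hx'
    · exact le_of_eq h1
    · have : x ∈ c0.support.tail := (Walk.support_rotate c0 m hmmem).mem_iff.mp hx'
      have : x ∈ c0.support := List.mem_of_mem_tail this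
      exact c0.support.toFinset.le_max' x (by simpa using this)
  clear_value c m
  clear hcdef hmdef hc0 hne hmmem
  cases c with
  | nil => simpa using hc.three_le_length
  | cons h q =>
    rename_i a
    have haS : a ∈ (Walk.cons h q).support := by simp
    have ham : a < m := lt_of_le_of_ne (hsub a haS) h.ne'
    have h1 : (a, m) ∈ F := mem_of_adj hF h.symm ham
    have hq3 : 2 ≤ q.length := by
      have := hc.three_le_length
      simp at this
      omega
    have hnodup : q.support.Nodup := by
      have := hc.2
      rwa [Walk.support_cons] at this
    obtain ⟨b, h', q'', hqr⟩ := Walk.not_nil_iff.mp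
      (Walk.not_nil_of_ne (show m ≠ a from h.ne) (p := q.reverse))
    have hbq : b ∈ q.support := by
      have : b ∈ q.reverse.support := by rw [hqr]; simp
      rwa [Walk.support_reverse, List.mem_reverse] at this
    have hbS : b ∈ (Walk.cons h q).support := by simp [hbq]
    have hbm : b < m := lt_of_le_of_ne (hsub b hbS) h'.ne'
    have h2 : (b, m) ∈ F := mem_of_adj hF h'.symm hbm
    have hab : a = b := by
      have := hUP _ h1 _ h2 rfl
      simpa [Prod.ext_iff] using this
    subst hab
    -- q : Walk a m with q.reverse = cons h' q'' and q'' : Walk a a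
    have hqeq : q = (Walk.cons h' q'').reverse := by
      rw [← hqr, Walk.reverse_reverse]
    have hsup : q.support = q''.reverse.support ++ [m] := by
      rw [hqeq, Walk.reverse_cons, Walk.support_append]
      simp
    have hnt : q''.reverse.support.Nodup := by
      rw [hsup] at hnodup
      exact (List.nodup_append.mp hnodup).1
    have hpath : q''.reverse.IsPath := (Walk.isPath_def _).mpr hnt
    have : (⟨q''.reverse, hpath⟩ : (graphOf F).Path a a) = SimpleGraph.Path.nil :=
      SimpleGraph.Path.loop_eq _
    have hq''nil : q''.reverse = Walk.nil := congrArg Subtype.val this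
    have hlen : q.length = 1 := by
      have h0 : q''.length = 0 := by
        have := congrArg Walk.length hq''nil
        simpa using this
      have := congrArg Walk.length hqeq
      simpa [h0] using this
    omega

lemma UP_of_ISF {E F : Finset (Fin n × Fin n)} (hE : ∀ e ∈ E, e.1 < e.2) (hFE : F ⊆ E)
    (hac : (graphOf F).IsAcyclic) (hinc : IsIncreasing F) : UP F := by
  classical
  have hF : ∀ e ∈ F, e.1 < e.2 := fun e he => hE e (hFE he)
  rintro ⟨u₁, v₁⟩ h₁ ⟨u₂, v₂⟩ h₂ heq
  dsimp at heq
  subst heq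
  suffices hu : u₁ = u₂ by rw [hu]
  by_contra hne
  obtain ⟨r, hrs, hrmin'⟩ := Finset.exists_min_image
    (@Finset.filter _ (fun w => (graphOf F).Reachable w v₁) (Classical.decPred _) Finset.univ)
    id ⟨v₁, by
      rw [@Finset.mem_filter _ _ (Classical.decPred _)]
      exact ⟨Finset.mem_univ _, Reachable.refl _⟩⟩
  rw [@Finset.mem_filter _ _ (Classical.decPred _)] at hrs
  have hrmem : (graphOf F).Reachable r v₁ := hrs.2
  have hmin : IsCompMin F r := by
    intro w hw
    refine hrmin' w ?_
    rw [@Finset.mem_filter _ _ (Classical.decPred _)]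
    exact ⟨Finset.mem_univ _, hw.symm.trans hrmem⟩
  have adj₁ : (graphOf F).Adj u₁ v₁ := adj_of_mem hF h₁
  have adj₂ : (graphOf F).Adj u₂ v₁ := adj_of_mem hF h₂
  have hru₁ : (graphOf F).Reachable r u₁ := hrmem.trans adj₁.reachable.symm
  have hru₂ : (graphOf F).Reachable r u₂ := hrmem.trans adj₂.reachable.symm
  obtain ⟨w₁⟩ := hru₁
  obtain ⟨w₂⟩ := hru₂
  set P₁ := w₁.toPath with hP₁
  set P₂ := w₂.toPath with hP₂
  have chain₁ := hinc r u₁ P₁.1 P₁.2 hmin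
  have chain₂ := hinc r u₂ P₂.1 P₂.2 hmin
  have hv₁ : v₁ ∉ P₁.1.support := by
    intro hmem
    exact absurd (hF _ h₁) (not_lt.mpr (le_end_of_chain P₁.1 chain₁ v₁ hmem))
  have hv₂ : v₁ ∉ P₂.1.support := by
    intro hmem
    exact absurd (hF _ h₂) (not_lt.mpr (le_end_of_chain P₂.1 chain₂ v₁ hmem))
  have hW₁ : (P₁.1.concat adj₁).IsPath := by
    rw [← Walk.isPath_reverse_iff, Walk.reverse_concat]
    exact Walk.IsPath.cons ((Walk.isPath_reverse_iff _).mpr P₁.2)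
      (by rw [Walk.support_reverse, List.mem_reverse]; exact hv₁)
  have hW₂ : (P₂.1.concat adj₂).IsPath := by
    rw [← Walk.isPath_reverse_iff, Walk.reverse_concat]
    exact Walk.IsPath.cons ((Walk.isPath_reverse_iff _).mpr P₂.2)
      (by rw [Walk.support_reverse, List.mem_reverse]; exact hv₂)
  have hpeq := isAcyclic_iff_path_unique.mp hac ⟨_, hW₁⟩ ⟨_, hW₂⟩
  have hWeq : P₁.1.concat adj₁ = P₂.1.concat adj₂ := congrArg Subtype.val hpeq
  have hsupeq : P₁.1.support = P₂.1.support := by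
    have := congrArg Walk.support hWeq
    rw [Walk.support_concat, Walk.support_concat] at this
    have h' := congrArg List.dropLast this
    rwa [List.dropLast_concat, List.dropLast_concat] at h'
  have hle₁ : u₂ ≤ u₁ := le_end_of_chain P₁.1 chain₁ u₂ (hsupeq ▸ P₂.1.end_mem_support)
  have hle₂ : u₁ ≤ u₂ := le_end_of_chain P₂.1 chain₂ u₁ (hsupeq ▸ P₁.1.end_mem_support)
  exact hne (le_antisymm hle₂ hle₁)

lemma supp_insert (e : Fin n × Fin n) (F : Finset (Fin n × Fin n)) :
    Supp (insert e F) = insert e.2 (Supp F) :=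
  Finset.image_insert _ _ _

lemma supp_erase {F : Finset (Fin n × Fin n)} (hUP : UP F) {e : Fin n × Fin n} (he : e ∈ F) :
    Supp (F.erase e) = (Supp F).erase e.2 := by
  ext x
  constructor
  · intro hx
    obtain ⟨f, hf, rfl⟩ := Finset.mem_image.mp hx
    have hf' := Finset.mem_of_mem_erase hf
    have hne : f ≠ e := Finset.ne_of_mem_erase hf
    refine Finset.mem_erase.mpr ⟨fun hsnd => hne (hUP f hf' e he hsnd), ?_⟩
    exact Finset.mem_image.mpr ⟨f, hf', rfl⟩
  · intro hx
    obtain ⟨hne, hxS⟩ := Finset.mem_erase.mp hx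
    obtain ⟨f, hf, rfl⟩ := Finset.mem_image.mp hxS
    exact Finset.mem_image.mpr ⟨f, Finset.mem_erase.mpr ⟨fun h => hne (by rw [h]), hf⟩, rfl⟩

lemma UP_insert {B : Finset (Fin n × Fin n)} {e : Fin n × Fin n} (hUP : UP B)
    (hv : e.2 ∉ Supp B) : UP (insert e B) := by
  intro f hf g hg hfg
  rcases Finset.mem_insert.mp hf with rfl | hf
  · rcases Finset.mem_insert.mp hg with rfl | hg
    · rfl
    · exact absurd (mem_supp_iff.mpr ⟨g.1, by rwa [hfg, Prod.mk.eta]⟩) hv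
  · rcases Finset.mem_insert.mp hg with rfl | hg
    · exact absurd (mem_supp_iff.mpr ⟨f.1, by rwa [← hfg, Prod.mk.eta]⟩) hv
    · exact hUP f hf g hg hfg

noncomputable def recVal (P Q : Finset (Fin n × Fin n)) : ℕ :=
  rIdx (Supp P \ Supp Q) (Supp Q \ Supp P)

lemma master {k ℓ : ℕ} (E : Finset (Fin n × Fin n)) (hE : ∀ e ∈ E, e.1 < e.2)
    (hkl : k < ℓ) (hl : ℓ ≤ n) (A B : Finset (Fin n × Fin n))
    (hA : A ∈ IFk E k) (hB : B ∈ IFk E ℓ) :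
    ∃ e : Fin n × Fin n, e ∈ A ∧ e ∉ B ∧ A.erase e ∈ IFk E (k + 1) ∧
      insert e B ∈ IFk E (ℓ - 1) ∧ recVal (A.erase e) (insert e B) = e.2.val + 1 ∧
      ∀ f ∈ insert e B, f.2 = e.2 → f = e := by
  classical
  obtain ⟨⟨hAE, hAac, hAinc⟩, hAk⟩ := hA
  obtain ⟨⟨hBE, hBac, hBinc⟩, hBl⟩ := hB
  have hFA : ∀ e ∈ A, e.1 < e.2 := fun e he => hE e (hAE he)
  have hFB : ∀ e ∈ B, e.1 < e.2 := fun e he => hE e (hBE he)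
  have hUPA : UP A := UP_of_ISF hE hAE hAac hAinc
  have hUPB : UP B := UP_of_ISF hE hBE hBac hBinc
  rw [numComp_eq hFA hUPA] at hAk
  rw [numComp_eq hFB hUPB] at hBl
  have hcardA : (Supp A).card ≤ n := le_trans (Finset.card_le_univ _) (by simp)
  have hcardB : (Supp B).card ≤ n := le_trans (Finset.card_le_univ _) (by simp)
  have hSA : (Supp A).card = n - k := by omega
  have hSB : (Supp B).card = n - ℓ := by omega
  have hc : (Supp B \ Supp A).card < (Supp A \ Supp B).card := by
    have h1 := Finset.card_sdiff_add_card_inter (Supp A) (Supp B)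
    have h2 := Finset.card_sdiff_add_card_inter (Supp B) (Supp A)
    rw [Finset.inter_comm] at h2
    omega
  set X := Supp A \ Supp B with hXdef
  set Y := Supp B \ Supp A with hYdef
  obtain ⟨hlt, hvX, hvY, hrec⟩ := core X Y hc
  set v : Fin n := ⟨cIdx X Y, hlt⟩ with hvdef
  have hvSA : v ∈ Supp A := (Finset.mem_sdiff.mp hvX).1
  have hvSB : v ∉ Supp B := (Finset.mem_sdiff.mp hvX).2
  obtain ⟨u, hu⟩ := mem_supp_iff.mp hvSA
  have heB : (u, v) ∉ B := fun h => hvSB (mem_supp_iff.mpr ⟨u, h⟩)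
  have hUPP : UP (A.erase (u, v)) := UP_subset (Finset.erase_subset _ _) hUPA
  have hFP : ∀ e ∈ A.erase (u, v), e.1 < e.2 :=
    fun e he => hFA e (Finset.mem_of_mem_erase he)
  have hUPQ : UP (insert (u, v) B) := UP_insert hUPB hvSB
  have hFQ : ∀ e ∈ insert (u, v) B, e.1 < e.2 := by
    intro e he
    rcases Finset.mem_insert.mp he with rfl | he
    · exact hFA _ hu
    · exact hFB _ he
  have hsuppP : Supp (A.erase (u, v)) = (Supp A).erase v := supp_erase hUPA hu
  have hsuppQ : Supp (insert (u, v) B) = insert v (Supp B) := supp_insert _ _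
  refine ⟨(u, v), hu, heB, ?_, ?_, ?_, ?_⟩
  · refine ⟨⟨Finset.Subset.trans (Finset.erase_subset _ _) hAE,
      acyclic_of_UP hFP hUPP, increasing_of_UP hFP hUPP⟩, ?_⟩
    rw [numComp_eq hFP hUPP, hsuppP, Finset.card_erase_of_mem hvSA]
    omega
  · refine ⟨⟨Finset.insert_subset (hAE hu) hBE,
      acyclic_of_UP hFQ hUPQ, increasing_of_UP hFQ hUPQ⟩, ?_⟩
    rw [numComp_eq hFQ hUPQ, hsuppQ, Finset.card_insert_of_notMem hvSB]
    omega
  · have hXid : Supp (A.erase (u, v)) \ Supp (insert (u, v) B) = X.erase v := by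
      rw [hsuppP, hsuppQ]
      ext x
      simp only [Finset.mem_sdiff, Finset.mem_erase, Finset.mem_insert, hXdef]
      tauto
    have hYid : Supp (insert (u, v) B) \ Supp (A.erase (u, v)) = insert v Y := by
      rw [hsuppP, hsuppQ]
      ext x
      simp only [Finset.mem_sdiff, Finset.mem_erase, Finset.mem_insert, hYdef]
      constructor
      · rintro ⟨h1 | h1, h2⟩
        · exact Or.inl h1
        · rcases Classical.em (x = v) with h3 | h3
          · exact Or.inl h3
          · exact Or.inr ⟨h1, fun hxa => h2 ⟨h3, hxa⟩⟩
      · rintro (h1 | ⟨h1, h2⟩)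
        · exact ⟨Or.inl h1, fun h => h.1 h1⟩
        · exact ⟨Or.inr h1, fun h => h2 h.2⟩
    rw [recVal, hXid, hYid]
    exact hrec
  · intro f hf hsnd
    rcases Finset.mem_insert.mp hf with rfl | hf
    · rfl
    · exfalso
      have hsnd' : f.2 = v := hsnd
      refine hvSB (mem_supp_iff.mpr ⟨f.1, ?_⟩)
      rwa [show ((f.1 : Fin n), v) = f from by rw [← hsnd']]

end ISFAux

/-- For 0 ≤ k < ℓ ≤ n there is an injective *local* map
IF_k × IF_ℓ → IF_(k+1) × IF_(ℓ-1): it moves a single edge e ∈ A \ B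
from the first forest to the second. -/
theorem exists_local_injection (n : ℕ) (hn : 1 ≤ n)
    (E : Finset (Fin n × Fin n)) (hE : ∀ e ∈ E, e.1 < e.2)
    (k ℓ : ℕ) (hkl : k < ℓ) (hl : ℓ ≤ n) :
    ∃ Ψ : ↥(IFk E k) × ↥(IFk E ℓ) → ↥(IFk E (k + 1)) × ↥(IFk E (ℓ - 1)),
      Function.Injective Ψ ∧
      ∀ AB : ↥(IFk E k) × ↥(IFk E ℓ),
        ∃ e ∈ (AB.1 : Finset (Fin n × Fin n)) \ (AB.2 : Finset (Fin n × Fin n)),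
          ((Ψ AB).1 : Finset (Fin n × Fin n)) = (AB.1 : Finset (Fin n × Fin n)).erase e ∧
          ((Ψ AB).2 : Finset (Fin n × Fin n)) = insert e (AB.2 : Finset (Fin n × Fin n)) := by
  classical
  have key := fun (AB : ↥(IFk E k) × ↥(IFk E ℓ)) =>
    ISFAux.master E hE hkl hl (AB.1 : Finset (Fin n × Fin n)) (AB.2 : Finset (Fin n × Fin n))
      AB.1.2 AB.2.2
  choose e h1 h2 h3 h4 h5 h6 using key
  refine ⟨fun AB => (⟨(AB.1 : Finset (Fin n × Fin n)).erase (e AB), h3 AB⟩,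
    ⟨insert (e AB) (AB.2 : Finset (Fin n × Fin n)), h4 AB⟩), ?_, ?_⟩
  · intro AB CD hEq
    have hP : (AB.1 : Finset (Fin n × Fin n)).erase (e AB)
        = (CD.1 : Finset (Fin n × Fin n)).erase (e CD) :=
      congrArg (fun z => ((z.1 : ↥(IFk E (k+1))) : Finset (Fin n × Fin n))) hEq
    have hQ : insert (e AB) (AB.2 : Finset (Fin n × Fin n))
        = insert (e CD) (CD.2 : Finset (Fin n × Fin n)) :=
      congrArg (fun z => ((z.2 : ↥(IFk E (ℓ-1))) : Finset (Fin n × Fin n))) hEq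
    have hrecEq : (e AB).2.val + 1 = (e CD).2.val + 1 := by
      rw [← h5 AB, ← h5 CD, hP, hQ]
    have hsnd : (e CD).2 = (e AB).2 := by
      apply Fin.ext
      omega
    have hee : e CD = e AB :=
      h6 AB (e CD) (by rw [hQ]; exact Finset.mem_insert_self _ _) hsnd
    have hAeq : (AB.1 : Finset (Fin n × Fin n)) = (CD.1 : Finset (Fin n × Fin n)) := by
      have h := congrArg (insert (e AB)) hP
      rwa [Finset.insert_erase (h1 AB), ← hee, Finset.insert_erase (h1 CD)] at h
    have hBeq : (AB.2 : Finset (Fin n × Fin n)) = (CD.2 : Finset (Fin n × Fin n)) := by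
      have h2CD := h2 CD
      rw [hee] at h2CD hQ
      have h := congrArg (fun s => Finset.erase s (e AB)) hQ
      rwa [Finset.erase_insert (h2 AB), Finset.erase_insert h2CD] at h
    exact Prod.ext (Subtype.ext hAeq) (Subtype.ext hBeq)
  · intro AB
    exact ⟨e AB, Finset.mem_sdiff.mpr ⟨h1 AB, h2 AB⟩, rfl, rfl⟩
end

section
/- For all n ≥ 0 and all k with 0 ≤ k < n/2, there exists an injection Φ : S_{n,k} → S_{n,k+1} from the k-element subsets of [n] to the (k+1)-element subsets of [n] such that X ⊆ Φ(X) for every k-element subset X of [n]. -/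
open Finset

/-- For 0 ≤ k < n/2 there is an injection from k-element subsets of [n]
to (k+1)-element subsets of [n] such that X ⊆ Φ(X) for every X. -/
theorem exists_subset_injection (n k : ℕ) (hk : 2 * k < n) :
    ∃ Φ : {X : Finset (Fin n) // X.card = k} → {Y : Finset (Fin n) // Y.card = k + 1},
      Function.Injective Φ ∧
      ∀ X : {X : Finset (Fin n) // X.card = k}, X.1 ⊆ (Φ X).1 := by
  classical
  set ι := {X : Finset (Fin n) // X.card = k}
  set κ := {Y : Finset (Fin n) // Y.card = k + 1}
  set t : ι → Finset κ := fun X => Finset.univ.filter (fun Y => X.1 ⊆ Y.1) with ht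
  have hcard : ∀ X : ι, (t X).card = n - k := by
    intro X
    have hc : (X.1ᶜ).card = n - k := by rw [card_compl, X.2, Fintype.card_fin]
    rw [← hc]
    refine (Finset.card_bij
      (fun a ha => (⟨insert a X.1, by
        rw [Finset.card_insert_of_notMem (Finset.mem_compl.mp ha), X.2]⟩ : κ)) ?_ ?_ ?_).symm
    · intro a ha
      simp only [ht, Finset.mem_filter, Finset.mem_univ, true_and]
      exact Finset.subset_insert a X.1
    · intro a ha b hb h
      have h' : insert a X.1 = insert b X.1 := congrArg Subtype.val h
      have ha' := Finset.mem_compl.mp ha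
      have : a ∈ insert b X.1 := h' ▸ Finset.mem_insert_self a X.1
      rcases Finset.mem_insert.mp this with h1 | h1
      · exact h1
      · exact absurd h1 ha'
    · intro Y hY
      have hsub : X.1 ⊆ Y.1 := by
        simpa only [ht, Finset.mem_filter, Finset.mem_univ, true_and] using hY
      have hne : X.1 ≠ Y.1 := by
        intro h; have := X.2; rw [h, Y.2] at this; omega
      obtain ⟨a, haY, haX⟩ := Finset.exists_of_ssubset (ssubset_of_subset_of_ne hsub hne)
      refine ⟨a, Finset.mem_compl.mpr haX, ?_⟩
      apply Subtype.ext
      apply Finset.eq_of_subset_of_card_le (Finset.insert_subset haY hsub)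
      rw [Y.2, Finset.card_insert_of_notMem haX, X.2]
  have hall : ∀ s : Finset ι, s.card ≤ (s.biUnion t).card := by
    intro s
    set B := s.biUnion t with hB
    have h2 : ∑ X ∈ s, (t X).card = (n - k) * s.card := by
      rw [Finset.sum_congr rfl (fun X _ => hcard X), Finset.sum_const, smul_eq_mul, mul_comm]
    have h3 : ∑ X ∈ s, (t X).card = ∑ Y ∈ B, (s.filter (fun X => Y ∈ t X)).card := by
      calc ∑ X ∈ s, (t X).card
          = ∑ X ∈ s, ∑ Y ∈ B, if Y ∈ t X then 1 else 0 := by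
            refine Finset.sum_congr rfl fun X hX => ?_
            rw [← Finset.card_filter, Finset.filter_mem_eq_inter,
              Finset.inter_eq_right.mpr (Finset.subset_biUnion_of_mem t hX)]
        _ = ∑ Y ∈ B, ∑ X ∈ s, if Y ∈ t X then 1 else 0 := Finset.sum_comm
        _ = ∑ Y ∈ B, (s.filter (fun X => Y ∈ t X)).card := by
            refine Finset.sum_congr rfl fun Y _ => ?_
            rw [Finset.card_filter]
    have h4 : ∀ Y : κ, (s.filter (fun X => Y ∈ t X)).card ≤ k + 1 := by
      intro Y
      have h5 : (s.filter (fun X => Y ∈ t X)).card ≤ (Y.1.powersetCard k).card := by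
        apply Finset.card_le_card_of_injOn (fun X => X.1)
        · intro X hX
          simp only [ht, Finset.mem_coe, Finset.mem_filter, Finset.mem_univ, true_and] at hX
          simp only [Finset.mem_coe, Finset.mem_powersetCard]
          exact ⟨hX.2, X.2⟩
        · intro a _ b _ h; exact Subtype.ext h
      rwa [Finset.card_powersetCard, Y.2, Nat.choose_succ_self_right] at h5
    have key : (k + 1) * s.card ≤ (k + 1) * B.card := by
      calc (k + 1) * s.card ≤ (n - k) * s.card := Nat.mul_le_mul_right _ (by omega)
        _ = ∑ X ∈ s, (t X).card := h2.symm
        _ = ∑ Y ∈ B, (s.filter (fun X => Y ∈ t X)).card := h3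
        _ ≤ ∑ _Y ∈ B, (k + 1) := Finset.sum_le_sum fun Y _ => h4 Y
        _ = B.card * (k + 1) := by rw [Finset.sum_const, smul_eq_mul]
        _ = (k + 1) * B.card := mul_comm _ _
    exact Nat.le_of_mul_le_mul_left key (by omega)
  obtain ⟨f, hinj, hmem⟩ := (Finset.all_card_le_biUnion_card_iff_exists_injective t).mp hall
  refine ⟨f, hinj, fun X => ?_⟩
  have := hmem X
  simpa only [ht, Finset.mem_filter, Finset.mem_univ, true_and] using this
end

section
/- Let G be a finite simple graph on vertex set [n], let B be an increasing spanning forest of G, and let e = (i,j) be an edge of G with i < j. Suppose j is the minimal vertex of its connected component in B and i lies in a different connected component of B. Then B ∪ {e} is again an increasing spanning forest of G (with one fewer connected component). -/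
open SimpleGraph

section Aux

variable {n : ℕ} {B : Finset (Fin n × Fin n)} {i j : Fin n}

lemma graphOf_mono {C : Finset (Fin n × Fin n)} (h : B ⊆ C) : graphOf B ≤ graphOf C := by
  intro a b hab
  simp only [graphOf, fromRel_adj] at hab ⊢
  exact ⟨hab.1, hab.2.imp (fun x => h x) (fun x => h x)⟩

lemma adj_insert (hne : i ≠ j) {a b : Fin n} :
    (graphOf (insert (i, j) B)).Adj a b ↔
      (graphOf B).Adj a b ∨ (a = i ∧ b = j) ∨ (a = j ∧ b = i) := by
  simp only [graphOf, fromRel_adj, Finset.mem_insert, Prod.mk.injEq]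
  constructor
  · rintro ⟨hab, (⟨rfl, rfl⟩ | h) | (⟨rfl, rfl⟩ | h)⟩ <;> tauto
  · rintro (⟨hab, h⟩ | ⟨rfl, rfl⟩ | ⟨rfl, rfl⟩)
    · exact ⟨hab, by tauto⟩
    · exact ⟨hne, by tauto⟩
    · exact ⟨hne.symm, by tauto⟩

lemma edges_sub (hne : i ≠ j) {u v : Fin n} (p : (graphOf (insert (i, j) B)).Walk u v)
    (h : s(i, j) ∉ p.edges) : ∀ e ∈ p.edges, e ∈ (graphOf B).edgeSet := by
  induction p with
  | nil => simp
  | @cons u x v hadj q ih =>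
    simp only [Walk.edges_cons, List.mem_cons] at h ⊢
    push_neg at h
    intro e he
    rcases he with rfl | he
    · rcases (adj_insert hne).1 hadj with hB | ⟨rfl, rfl⟩ | ⟨rfl, rfl⟩
      · exact hB
      · exact absurd rfl h.1.symm
      · exact absurd (Sym2.eq_swap) h.1.symm
    · exact ih h.2 e he

lemma decomp (hne : i ≠ j) {u v : Fin n} (p : (graphOf (insert (i, j) B)).Walk u v)
    (hp : p.IsPath) (hmem : s(i, j) ∈ p.edges) :
    (∃ (q : (graphOf B).Walk u i) (q' : (graphOf B).Walk j v),
      p.support = q.support ++ q'.support ∧ q.IsPath ∧ q'.IsPath) ∨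
    (∃ (q : (graphOf B).Walk u j) (q' : (graphOf B).Walk i v),
      p.support = q.support ++ q'.support ∧ q.IsPath ∧ q'.IsPath) := by
  induction p with
  | nil => simp at hmem
  | @cons u x v hadj q ih =>
    simp only [Walk.edges_cons, List.mem_cons] at hmem
    by_cases hx : s(i, j) = s(u, x)
    · have hq : s(i, j) ∉ q.edges := by
        have := hp.isTrail.edges_nodup
        simp only [Walk.edges_cons, List.nodup_cons] at this
        rw [hx]; exact this.1
      have hsub := edges_sub hne q hq
      rcases Sym2.eq_iff.1 hx with ⟨rfl, rfl⟩ | ⟨rfl, rfl⟩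
      · -- u = i, x = j
        left
        exact ⟨Walk.nil, q.transfer _ hsub, by simp [Walk.support_transfer],
          Walk.IsPath.nil, hp.of_cons.transfer _⟩
      · -- u = j, x = i
        right
        exact ⟨Walk.nil, q.transfer _ hsub, by simp [Walk.support_transfer],
          Walk.IsPath.nil, hp.of_cons.transfer _⟩
    · have hmem' : s(i, j) ∈ q.edges := hmem.resolve_left hx
      have hBadj : (graphOf B).Adj u x := by
        rcases (adj_insert hne).1 hadj with hB | ⟨rfl, rfl⟩ | ⟨rfl, rfl⟩
        · exact hB
        · exact absurd rfl hx
        · exact absurd Sym2.eq_swap hx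
      have hunotin : u ∉ q.support := (Walk.cons_isPath_iff _ _ |>.1 hp).2
      rcases ih hp.of_cons hmem' with ⟨qa, qb, hsup, hqa, hqb⟩ | ⟨qa, qb, hsup, hqa, hqb⟩
      · left
        refine ⟨Walk.cons hBadj qa, qb, ?_, hqa.cons ?_, hqb⟩
        · simp [Walk.support_cons, hsup]
        · intro hc; exact hunotin (by rw [hsup]; exact List.mem_append_left _ hc)
      · right
        refine ⟨Walk.cons hBadj qa, qb, ?_, hqa.cons ?_, hqb⟩
        · simp [Walk.support_cons, hsup]
        · intro hc; exact hunotin (by rw [hsup]; exact List.mem_append_left _ hc)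

lemma reach_insert (hne : i ≠ j) (hsep : ¬ (graphOf B).Reachable i j)
    {u v : Fin n} (h : (graphOf (insert (i, j) B)).Reachable u v) :
    (graphOf B).Reachable u v ∨
    ((graphOf B).Reachable u i ∧ (graphOf B).Reachable j v) ∨
    ((graphOf B).Reachable u j ∧ (graphOf B).Reachable i v) := by
  obtain ⟨p⟩ := h
  induction p with
  | nil => exact Or.inl (Reachable.refl _)
  | @cons u x v hadj q ih =>
    rcases (adj_insert hne).1 hadj with hB | ⟨rfl, rfl⟩ | ⟨rfl, rfl⟩
    · rcases ih with h1 | ⟨h1, h2⟩ | ⟨h1, h2⟩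
      · exact Or.inl (hB.reachable.trans h1)
      · exact Or.inr (Or.inl ⟨hB.reachable.trans h1, h2⟩)
      · exact Or.inr (Or.inr ⟨hB.reachable.trans h1, h2⟩)
    · rcases ih with h1 | ⟨h1, h2⟩ | ⟨h1, h2⟩
      · exact Or.inr (Or.inl ⟨Reachable.refl _, h1⟩)
      · exact absurd h1.symm hsep
      · exact Or.inl h2
    · rcases ih with h1 | ⟨h1, h2⟩ | ⟨h1, h2⟩
      · exact Or.inr (Or.inr ⟨Reachable.refl _, h1⟩)
      · exact Or.inl h2
      · exact absurd h1 hsep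

end Aux

/-- If B is an increasing spanning forest, e = (i,j) an edge of G with i < j,
j the minimal vertex of its component in B, and i in a different component,
then B ∪ {e} is again an increasing spanning forest, with one fewer component. -/
theorem insert_edge_isf (n : ℕ) (hn : 1 ≤ n)
    (E : Finset (Fin n × Fin n)) (hE : ∀ e ∈ E, e.1 < e.2)
    (B : Finset (Fin n × Fin n)) (hB : IsISF E B)
    (i j : Fin n) (hij : i < j) (he : (i, j) ∈ E)
    (hjmin : IsCompMin B j) (hsep : ¬ (graphOf B).Reachable i j) :
    IsISF E (insert (i, j) B) ∧ numComp (insert (i, j) B) + 1 = numComp B := by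
  classical
  obtain ⟨hBE, hacyc, hinc⟩ := hB
  have hne : i ≠ j := hij.ne
  have hmono : graphOf B ≤ graphOf (insert (i, j) B) :=
    graphOf_mono (Finset.subset_insert _ _)
  have hadjij : (graphOf (insert (i, j) B)).Adj i j :=
    (adj_insert hne).2 (Or.inr (Or.inl ⟨rfl, rfl⟩))
  -- acyclicity
  have hacyc' : (graphOf (insert (i, j) B)).IsAcyclic := by
    intro v c hc
    by_cases hmem : s(i, j) ∈ c.edges
    · obtain ⟨hadj, hreach⟩ :=
        (adj_and_reachable_delete_edges_iff_exists_cycle).2 ⟨v, c, hc, hmem⟩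
      apply hsep
      refine hreach.mono ?_
      intro a b hab
      rw [deleteEdges_adj] at hab
      rcases (adj_insert hne).1 hab.1 with hBadj | ⟨rfl, rfl⟩ | ⟨rfl, rfl⟩
      · exact hBadj
      · exact absurd (by simp [fromEdgeSet_adj, hne]) hab.2
      · exact absurd (by simp [fromEdgeSet_adj, hne.symm, Sym2.eq_swap]) hab.2
    · exact hacyc (c.transfer _ (edges_sub hne c hmem)) (hc.transfer _)
  -- increasingness
  have hinc' : IsIncreasing (insert (i, j) B) := by
    intro r v p hp hrmin
    by_cases hmem : s(i, j) ∈ p.edges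
    · rcases decomp hne p hp hmem with ⟨q, q', hsup, hq, hq'⟩ | ⟨q, q', hsup, hq, hq'⟩
      · have hrminB : IsCompMin B r := fun w hw => hrmin w (hw.mono hmono)
        have c1 := hinc r i q hq hrminB
        have c2 := hinc j v q' hq' hjmin
        rw [hsup]
        refine c1.append c2 ?_
        intro x hx y hy
        have hx' : x = i := by
          rw [List.getLast?_eq_getLast (by simp : q.support ≠ []), Option.mem_some_iff] at hx
          rw [← hx]; exact q.getLast_support
        have hy' : y = j := by
          rw [q'.support_eq_cons] at hy
          simp only [List.head?_cons, Option.mem_some_iff] at hy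
          exact hy.symm
        rw [hx', hy']; exact hij
      · exfalso
        have h1 : j ≤ r := hjmin r (Reachable.symm ⟨q⟩)
        have h2 : r ≤ i := hrmin i (((Reachable.mono hmono ⟨q⟩)).trans hadjij.symm.reachable)
        exact absurd (lt_of_le_of_lt (h1.trans h2) hij) (lt_irrefl j)
    · have hsub := edges_sub hne p hmem
      have hrminB : IsCompMin B r := fun w hw => hrmin w (hw.mono hmono)
      have := hinc r v (p.transfer _ hsub) (hp.transfer _) hrminB
      rwa [Walk.support_transfer] at this
  refine ⟨⟨Finset.insert_subset he hBE, hacyc', hinc'⟩, ?_⟩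
  -- component count
  haveI : Finite (graphOf B).ConnectedComponent :=
    Finite.of_surjective _ (fun c => c.exists_rep)
  haveI : Finite (graphOf (insert (i, j) B)).ConnectedComponent :=
    Finite.of_surjective _ (fun c => c.exists_rep)
  set φ : (graphOf B).ConnectedComponent → (graphOf (insert (i, j) B)).ConnectedComponent :=
    ConnectedComponent.map (Hom.ofLE hmono) with hφ
  have hφmk : ∀ u : Fin n, φ ((graphOf B).connectedComponentMk u)
      = (graphOf (insert (i, j) B)).connectedComponentMk u := fun u => rfl
  set a : (graphOf B).ConnectedComponent := (graphOf B).connectedComponentMk j with ha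
  have hbij : Function.Bijective (fun c : {c // c ≠ a} => φ c.1) := by
    constructor
    · rintro ⟨c₁, hc₁⟩ ⟨c₂, hc₂⟩ hcc
      obtain ⟨u, rfl⟩ := c₁.exists_rep
      obtain ⟨w, rfl⟩ := c₂.exists_rep
      simp only [hφmk] at hcc
      have hu : ¬ (graphOf B).Reachable u j := fun h => hc₁ (ConnectedComponent.sound h)
      have hw : ¬ (graphOf B).Reachable w j := fun h => hc₂ (ConnectedComponent.sound h)
      have hr : (graphOf (insert (i, j) B)).Reachable u w := ConnectedComponent.exact hcc
      rcases reach_insert hne hsep hr with h1 | ⟨h1, h2⟩ | ⟨h1, h2⟩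
      · exact Subtype.ext (ConnectedComponent.sound h1)
      · exact absurd h2.symm hw
      · exact absurd h1 hu
    · intro d
      obtain ⟨v, rfl⟩ := d.exists_rep
      by_cases hv : (graphOf B).Reachable v j
      · refine ⟨⟨(graphOf B).connectedComponentMk i, ?_⟩, ?_⟩
        · intro h
          exact hsep (ConnectedComponent.exact h)
        · simp only [hφmk]
          exact ConnectedComponent.sound
            (hadjij.reachable.trans ((hv.mono hmono).symm)).symm.symm
      · exact ⟨⟨(graphOf B).connectedComponentMk v,
          fun h => hv (ConnectedComponent.exact h)⟩, rfl⟩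
  have h1 : numComp (insert (i, j) B) = Nat.card {c // c ≠ a} :=
    (Nat.card_congr (Equiv.ofBijective _ hbij)).symm
  have h2 : Nat.card (graphOf B).ConnectedComponent
      = Nat.card {c // c = a} + Nat.card {c // c ≠ a} := by
    rw [← Nat.card_sum]
    exact Nat.card_congr (Equiv.sumCompl (· = a)).symm
  haveI : Unique {c // c = a} := ⟨⟨⟨a, rfl⟩⟩, by rintro ⟨_, rfl⟩; rfl⟩
  have h3 : Nat.card {c // c = a} = 1 := Nat.card_unique
  show numComp (insert (i, j) B) + 1 = Nat.card (graphOf B).ConnectedComponent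
  rw [h1, h2, h3]
  omega
end

section
/- For all n ≥ 1 and all k, ℓ with 0 ≤ k < ℓ ≤ n, there exists an injective map from S_{n,k} × S_{n,ℓ} to S_{n,k+1} × S_{n,ℓ−1} which sends each pair (X, Y) to a pair of the form (X ∪ {i}, Y \ {i}) for some element i ∈ Y \ X. -/
open Finset

namespace ExistsLocalSubsetInjection

variable {n k ℓ : ℕ}

/-- The set of admissible images of a pair `(X, Y)`. -/
private def hallR (p : {X : Finset (Fin n) // X.card = k} × {Y : Finset (Fin n) // Y.card = ℓ}) :
    Finset ({X : Finset (Fin n) // X.card = k + 1} × {Y : Finset (Fin n) // Y.card = ℓ - 1}) :=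
  (p.2.1 \ p.1.1).attach.image fun i =>
    (⟨insert i.1 p.1.1, by
        have h := Finset.mem_sdiff.mp i.2
        rw [Finset.card_insert_of_notMem h.2, p.1.2]⟩,
     ⟨p.2.1.erase i.1, by
        have h := Finset.mem_sdiff.mp i.2
        rw [Finset.card_erase_of_mem h.1, p.2.2]⟩)

private lemma mem_hallR {p w} :
    w ∈ hallR (n := n) (k := k) (ℓ := ℓ) p ↔ ∃ i ∈ p.2.1 \ p.1.1,
      w.1.1 = insert i p.1.1 ∧ w.2.1 = p.2.1.erase i := by
  constructor
  · intro hw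
    obtain ⟨i, _, rfl⟩ := Finset.mem_image.mp hw
    exact ⟨i.1, i.2, rfl, rfl⟩
  · rintro ⟨i, hi, h1, h2⟩
    refine Finset.mem_image.mpr ⟨⟨i, hi⟩, Finset.mem_attach _ _, ?_⟩
    exact Prod.ext (Subtype.ext h1.symm) (Subtype.ext h2.symm)

private lemma inter_of_mem_hallR {p w} (hw : w ∈ hallR (n := n) (k := k) (ℓ := ℓ) p) :
    w.1.1 ∩ w.2.1 = p.1.1 ∩ p.2.1 := by
  obtain ⟨i, hi, h1, h2⟩ := mem_hallR.mp hw
  obtain ⟨hiY, hiX⟩ := Finset.mem_sdiff.mp hi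
  ext x
  simp only [h1, h2, Finset.mem_inter, Finset.mem_insert, Finset.mem_erase]
  constructor
  · rintro ⟨hx1 | hx1, hx2, hx3⟩
    · exact absurd (hx1 ▸ hx3) (fun h => (hx1 ▸ hx2) rfl)
    · exact ⟨hx1, hx3⟩
  · rintro ⟨hx1, hx2⟩
    exact ⟨Or.inr hx1, fun h => hiX (h ▸ hx1), hx2⟩

private lemma card_hallR {p} (a : ℕ) (ha : (p.1.1 ∩ p.2.1).card = a) :
    (hallR (n := n) (k := k) (ℓ := ℓ) p).card = ℓ - a := by
  have hinj : Set.InjOn (fun i : {x // x ∈ p.2.1 \ p.1.1} =>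
      ((⟨insert i.1 p.1.1, by
        have h := Finset.mem_sdiff.mp i.2
        rw [Finset.card_insert_of_notMem h.2, p.1.2]⟩,
       ⟨p.2.1.erase i.1, by
        have h := Finset.mem_sdiff.mp i.2
        rw [Finset.card_erase_of_mem h.1, p.2.2]⟩) :
      {X : Finset (Fin n) // X.card = k + 1} × {Y : Finset (Fin n) // Y.card = ℓ - 1}))
      ((p.2.1 \ p.1.1).attach : Set _) := by
    rintro ⟨i, hi⟩ _ ⟨j, hj⟩ _ h
    have h1 : insert i p.1.1 = insert j p.1.1 := congrArg (fun q => q.1.1) h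
    have hiX := (Finset.mem_sdiff.mp hi).2
    have : i ∈ insert j p.1.1 := h1 ▸ Finset.mem_insert_self i p.1.1
    rcases Finset.mem_insert.mp this with h' | h'
    · exact Subtype.ext h'
    · exact absurd h' hiX
  rw [hallR, Finset.card_image_of_injOn hinj, Finset.card_attach]
  have := Finset.card_inter_add_card_sdiff p.2.1 p.1.1
  rw [Finset.inter_comm, ha, p.2.2] at this
  omega

private lemma card_le_of_mem {p : {X : Finset (Fin n) // X.card = k} ×
    {Y : Finset (Fin n) // Y.card = ℓ}} : (p.1.1 ∩ p.2.1).card ≤ k :=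
  le_of_le_of_eq (Finset.card_le_card Finset.inter_subset_left) p.1.2

private lemma fiber_hall (hn : 1 ≤ n) (hkl : k < ℓ) (a : ℕ)
    (S : Finset ({X : Finset (Fin n) // X.card = k} × {Y : Finset (Fin n) // Y.card = ℓ}))
    (hS : ∀ p ∈ S, (p.1.1 ∩ p.2.1).card = a) :
    S.card ≤ (S.biUnion hallR).card := by
  classical
  rcases S.eq_empty_or_nonempty with rfl | ⟨p₀, hp₀⟩
  · simp
  have ha : a ≤ k := by rw [← hS p₀ hp₀]; exact card_le_of_mem
  set N := S.biUnion hallR with hN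
  have key : S.card * (ℓ - a) ≤ N.card * (k + 1 - a) := by
    refine Finset.card_mul_le_card_mul (fun p w => w ∈ hallR p) ?_ ?_
    · intro p hp
      have hsub : hallR p ⊆ N.bipartiteAbove (fun p w => w ∈ hallR p) p := by
        intro w hw
        exact Finset.mem_filter.mpr ⟨Finset.mem_biUnion.mpr ⟨p, hp, hw⟩, hw⟩
      calc ℓ - a = (hallR p).card := (card_hallR a (hS p hp)).symm
        _ ≤ _ := Finset.card_le_card hsub
    · intro w hw
      obtain ⟨q, hq, hwq⟩ := Finset.mem_biUnion.mp hw
      -- bound the number of preimages by the size of w.1.1 \ w.2.1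
      have hcard : (w.1.1 \ w.2.1).card = k + 1 - a := by
        have h1 := Finset.card_inter_add_card_sdiff w.1.1 w.2.1
        rw [inter_of_mem_hallR hwq, hS q hq, w.1.2] at h1
        omega
      rw [← hcard]
      have i₀ : Fin n := ⟨0, hn⟩
      refine Finset.card_le_card_of_injOn
        (fun p => if h : w ∈ hallR p then (mem_hallR.mp h).choose else i₀) ?_ ?_
      · intro p hp
        have hmem := (Finset.mem_filter.mp hp).2
        simp only [dif_pos hmem]
        obtain ⟨hi, h1, h2⟩ := (mem_hallR.mp hmem).choose_spec
        refine Finset.mem_sdiff.mpr ⟨?_, ?_⟩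
        · have := Finset.mem_insert_self (mem_hallR.mp hmem).choose p.1.1
          rwa [← h1] at this
        · have := Finset.notMem_erase (mem_hallR.mp hmem).choose p.2.1
          rwa [← h2] at this
      · intro p1 hp1 p2 hp2 heq
        have hm1 := (Finset.mem_filter.mp hp1).2
        have hm2 := (Finset.mem_filter.mp hp2).2
        simp only [dif_pos hm1, dif_pos hm2] at heq
        obtain ⟨hi1, h11, h12⟩ := (mem_hallR.mp hm1).choose_spec
        obtain ⟨hi2, h21, h22⟩ := (mem_hallR.mp hm2).choose_spec
        set i := (mem_hallR.mp hm1).choose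
        set j := (mem_hallR.mp hm2).choose
        have hij : i = j := heq
        obtain ⟨hi1Y, hi1X⟩ := Finset.mem_sdiff.mp hi1
        obtain ⟨hi2Y, hi2X⟩ := Finset.mem_sdiff.mp hi2
        have e1 : p1.1.1 = p2.1.1 := by
          have a1 : p1.1.1 = w.1.1.erase i := by
            rw [h11, Finset.erase_insert hi1X]
          have a2 : p2.1.1 = w.1.1.erase j := by
            rw [h21, Finset.erase_insert hi2X]
          rw [a1, a2, hij]
        have e2 : p1.2.1 = p2.2.1 := by
          have a1 : p1.2.1 = insert i w.2.1 := by
            rw [h12, Finset.insert_erase hi1Y]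
          have a2 : p2.2.1 = insert j w.2.1 := by
            rw [h22, Finset.insert_erase hi2Y]
          rw [a1, a2, hij]
        exact Prod.ext (Subtype.ext e1) (Subtype.ext e2)
  have h1 : k + 1 - a ≤ ℓ - a := by omega
  have h2 : 0 < ℓ - a := by omega
  have := key.trans (Nat.mul_le_mul_left N.card h1)
  exact Nat.le_of_mul_le_mul_right this h2

end ExistsLocalSubsetInjection

open ExistsLocalSubsetInjection in
/-- For n ≥ 1 and 0 ≤ k < ℓ ≤ n there is an injection
S_(n,k) × S_(n,ℓ) → S_(n,k+1) × S_(n,ℓ-1) sending (X, Y) to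
(X ∪ {i}, Y \ {i}) for some i ∈ Y \ X. -/
theorem exists_local_subset_injection (n k ℓ : ℕ) (hn : 1 ≤ n) (hkl : k < ℓ) (hl : ℓ ≤ n) :
    ∃ Ψ : {X : Finset (Fin n) // X.card = k} × {Y : Finset (Fin n) // Y.card = ℓ} →
          {X : Finset (Fin n) // X.card = k + 1} × {Y : Finset (Fin n) // Y.card = ℓ - 1},
      Function.Injective Ψ ∧
      ∀ XY, ∃ i ∈ (XY.2 : Finset (Fin n)) \ (XY.1 : Finset (Fin n)),
        ((Ψ XY).1 : Finset (Fin n)) = insert i (XY.1 : Finset (Fin n)) ∧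
        ((Ψ XY).2 : Finset (Fin n)) = (XY.2 : Finset (Fin n)).erase i := by
  classical
  have hall : ∀ S : Finset ({X : Finset (Fin n) // X.card = k} ×
      {Y : Finset (Fin n) // Y.card = ℓ}), S.card ≤ (S.biUnion hallR).card := by
    intro S
    set N := S.biUnion hallR with hN
    have haw : ∀ w ∈ N, (w.1.1 ∩ w.2.1).card < k + 1 := by
      intro w hw
      obtain ⟨p, hp, hwp⟩ := Finset.mem_biUnion.mp hw
      rw [inter_of_mem_hallR hwp]
      exact Nat.lt_succ_of_le card_le_of_mem
    calc S.card
        = ∑ a ∈ Finset.range (k + 1),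
            (S.filter (fun p => (p.1.1 ∩ p.2.1).card = a)).card :=
          Finset.card_eq_sum_card_fiberwise
            (fun p _ => Finset.mem_range.mpr (Nat.lt_succ_of_le card_le_of_mem))
      _ ≤ ∑ a ∈ Finset.range (k + 1),
            (N.filter (fun w => (w.1.1 ∩ w.2.1).card = a)).card := by
          refine Finset.sum_le_sum fun a _ => ?_
          refine (fiber_hall hn hkl a _ (fun p hp => (Finset.mem_filter.mp hp).2)).trans
            (Finset.card_le_card ?_)
          intro w hw
          obtain ⟨p, hp, hwp⟩ := Finset.mem_biUnion.mp hw
          have hpS := Finset.mem_filter.mp hp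
          refine Finset.mem_filter.mpr ⟨Finset.mem_biUnion.mpr ⟨p, hpS.1, hwp⟩, ?_⟩
          rw [inter_of_mem_hallR hwp]
          exact hpS.2
      _ = N.card :=
          (Finset.card_eq_sum_card_fiberwise
            (fun w hw => Finset.mem_range.mpr (haw w hw))).symm
  obtain ⟨f, hinj, hmem⟩ :=
    (Finset.all_card_le_biUnion_card_iff_exists_injective hallR).mp hall
  exact ⟨f, hinj, fun XY => mem_hallR.mp (hmem XY)⟩
end

section
/- Let x_1, …, x_n be indeterminates and let e_k(x_1,…,x_n) denote the k-th elementary symmetric polynomial. Then the sequence (e_0, e_1, …, e_n) is strongly x-log-concave: for all p, q with 0 < p ≤ q < n, the polynomial e_p(x)·e_q(x) − e_{p−1}(x)·e_{q+1}(x) has only nonnegative coefficients. -/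
open MvPolynomial Finset

namespace EsymmLogConcave

variable {n : ℕ}

/-- The exponent finsupp of the squarefree monomial `∏ i ∈ A, X i`. -/
noncomputable def ind (A : Finset (Fin n)) : Fin n →₀ ℕ := ∑ i ∈ A, Finsupp.single i 1

lemma ind_apply (A : Finset (Fin n)) (j : Fin n) :
    ind A j = if j ∈ A then 1 else 0 := by
  classical
  simp [ind, Finsupp.finset_sum_apply, Finsupp.single_apply, Finset.sum_ite_eq']

lemma esymm_eq (k : ℕ) :
    esymm (Fin n) ℝ k = ∑ t ∈ powersetCard k (univ : Finset (Fin n)), monomial (ind t) 1 :=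
  esymm_eq_sum_monomial _ _ _

/-- Coefficient of `m` in `e_a * e_b` counts pairs of subsets. -/
lemma coeff_esymm_mul (a b : ℕ) (m : Fin n →₀ ℕ) :
    (esymm (Fin n) ℝ a * esymm (Fin n) ℝ b).coeff m =
      (((powersetCard a (univ : Finset (Fin n))) ×ˢ (powersetCard b univ)).filter
        (fun AB => ind AB.1 + ind AB.2 = m)).card := by
  classical
  rw [esymm_eq, esymm_eq, Finset.sum_mul_sum]
  simp only [monomial_mul, mul_one]
  rw [coeff_sum]
  simp only [coeff_sum, coeff_monomial]
  rw [← Finset.sum_product']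
  rw [Finset.sum_boole]

lemma mem_char {A B : Finset (Fin n)} {m : Fin n →₀ ℕ} (h : ind A + ind B = m) (i : Fin n) :
    m i = (if i ∈ A then 1 else 0) + (if i ∈ B then 1 else 0) := by
  rw [← h]; simp [ind_apply]

/-- The counting lemma: the number of pairs is a binomial coefficient. -/
lemma count_eq (a b : ℕ) (m : Fin n →₀ ℕ) (hm2 : ∀ i, m i ≤ 2)
    (hs2 : (univ.filter (fun i => m i = 2)).card ≤ a)
    (hsum : (univ.filter (fun i => m i = 1)).card
        + 2 * (univ.filter (fun i => m i = 2)).card = a + b) :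
    (((powersetCard a (univ : Finset (Fin n))) ×ˢ (powersetCard b univ)).filter
        (fun AB => ind AB.1 + ind AB.2 = m)).card =
      (univ.filter (fun i => m i = 1)).card.choose (a - (univ.filter (fun i => m i = 2)).card) := by
  classical
  set T1 : Finset (Fin n) := univ.filter (fun i => m i = 1) with hT1
  set T2 : Finset (Fin n) := univ.filter (fun i => m i = 2) with hT2
  have hdisj : Disjoint T1 T2 := by
    rw [Finset.disjoint_left]
    intro i h1 h2
    simp only [hT1, hT2, Finset.mem_filter] at h1 h2
    omega
  rw [← Finset.card_powersetCard (a - T2.card) T1]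
  apply Finset.card_nbij' (fun AB => AB.1 \ T2) (fun S => (T2 ∪ S, T2 ∪ (T1 \ S)))
  · rintro ⟨A, B⟩ hAB
    simp only [Finset.mem_coe, Finset.mem_filter, Finset.mem_product, Finset.mem_powersetCard] at hAB
    obtain ⟨⟨⟨-, hA⟩, -, hB⟩, hm⟩ := hAB
    have hc := mem_char hm
    have hT2A : T2 ⊆ A := by
      intro i hi
      simp only [hT2, Finset.mem_filter] at hi
      have := hc i; split_ifs at this <;> simp_all <;> omega
    simp only [Finset.mem_coe, Finset.mem_powersetCard]
    constructor
    · intro i hi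
      simp only [Finset.mem_sdiff, hT2, Finset.mem_filter, Finset.mem_univ, true_and] at hi ⊢
      simp only [hT1, Finset.mem_filter, Finset.mem_univ, true_and]
      have := hc i; split_ifs at this <;> simp_all <;> omega
    · rw [Finset.card_sdiff_of_subset hT2A, hA]
  · intro S hS
    simp only [Finset.mem_coe, Finset.mem_powersetCard] at hS
    obtain ⟨hS1, hScard⟩ := hS
    have hST2 : Disjoint S T2 := hdisj.mono_left hS1
    have hT1S : Disjoint (T1 \ S) T2 := hdisj.mono_left (Finset.sdiff_subset)
    simp only [Finset.mem_coe, Finset.mem_filter, Finset.mem_product, Finset.mem_powersetCard]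
    refine ⟨⟨⟨Finset.subset_univ _, ?_⟩, Finset.subset_univ _, ?_⟩, ?_⟩
    · rw [Finset.card_union_of_disjoint hST2.symm, hScard]; omega
    · have hle : S.card ≤ T1.card := Finset.card_le_card hS1
      rw [hScard] at hle
      rw [Finset.card_union_of_disjoint hT1S.symm, Finset.card_sdiff_of_subset hS1, hScard]
      omega
    · ext i
      have hmi := hm2 i
      simp only [Finsupp.add_apply, ind_apply, Finset.mem_union, Finset.mem_sdiff]
      by_cases h2 : i ∈ T2
      · have : m i = 2 := by simpa [hT2] using h2
        have hiS : i ∉ S := Finset.disjoint_right.mp hST2 h2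
        simp [h2, this]
      · by_cases h1 : i ∈ T1
        · have : m i = 1 := by simpa [hT1] using h1
          by_cases hiS : i ∈ S <;> simp [h2, h1, hiS, this]
        · have h0 : m i = 0 := by
            simp only [hT1, hT2, Finset.mem_filter, Finset.mem_univ, true_and] at h1 h2
            omega
          have hiS : i ∉ S := fun h => h1 (hS1 h)
          simp [h2, hiS, h1, h0]
  · rintro ⟨A, B⟩ hAB
    simp only [Finset.mem_coe, Finset.mem_filter, Finset.mem_product, Finset.mem_powersetCard] at hAB
    obtain ⟨⟨⟨-, hA⟩, -, hB⟩, hm⟩ := hAB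
    have hc := mem_char hm
    have hT2A : T2 ⊆ A := by
      intro i hi
      simp only [hT2, Finset.mem_filter] at hi
      have := hc i; split_ifs at this <;> simp_all <;> omega
    have e1 : T2 ∪ A \ T2 = A := Finset.union_sdiff_of_subset hT2A
    have e2 : T2 ∪ T1 \ (A \ T2) = B := by
      ext i
      have := hc i
      simp only [Finset.mem_union, Finset.mem_sdiff, hT1, hT2, Finset.mem_filter,
        Finset.mem_univ, true_and]
      split_ifs at this <;> simp_all <;> omega
    simp [e1, e2]
  · intro S hS
    simp only [Finset.mem_coe, Finset.mem_powersetCard] at hS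
    have hST2 : Disjoint S T2 := hdisj.mono_left hS.1
    simp [Finset.union_sdiff_cancel_left hST2.symm]

lemma choose_step {s a : ℕ} (ha : 1 ≤ a) (h : 2 * a ≤ s + 1) :
    s.choose (a - 1) ≤ s.choose a := by
  rcases lt_or_ge (a - 1) (s / 2) with hlt | hge
  · have := Nat.choose_le_succ_of_lt_half_left hlt
    have : s.choose (a - 1) ≤ s.choose (a - 1 + 1) := this
    rwa [Nat.sub_add_cancel ha] at this
  · have heq : 2 * a = s + 1 := by omega
    have h1 : a ≤ s := by omega
    have h2 : s - a = a - 1 := by omega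
    rw [← h2, Nat.choose_symm h1]

end EsymmLogConcave

open EsymmLogConcave in
/-- Strong x-log-concavity of the elementary symmetric polynomials:
for 0 < p ≤ q < n, e_p·e_q − e_(p−1)·e_(q+1) has nonnegative coefficients. -/
theorem esymm_strongly_x_log_concave (n : ℕ) (p q : ℕ)
    (hp : 0 < p) (hpq : p ≤ q) (hq : q < n) :
    ∀ m : Fin n →₀ ℕ,
      0 ≤ (esymm (Fin n) ℝ p * esymm (Fin n) ℝ q -
            esymm (Fin n) ℝ (p - 1) * esymm (Fin n) ℝ (q + 1)).coeff m := by
  classical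
  intro m
  rw [coeff_sub, sub_nonneg, coeff_esymm_mul, coeff_esymm_mul]
  rw [Nat.cast_le]
  set s₁ := ((powersetCard (p - 1) (univ : Finset (Fin n))) ×ˢ (powersetCard (q + 1) univ)).filter
      (fun AB => ind AB.1 + ind AB.2 = m) with hs₁
  rcases Finset.eq_empty_or_nonempty s₁ with he | ⟨⟨A, B⟩, hAB⟩
  · simp [he]
  · -- extract structural facts about m from the witness pair
    simp only [hs₁, Finset.mem_filter, Finset.mem_product, Finset.mem_powersetCard] at hAB
    obtain ⟨⟨⟨-, hA⟩, -, hB⟩, hm⟩ := hAB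
    have hc := mem_char hm
    have hm2 : ∀ i, m i ≤ 2 := by
      intro i; have := hc i; split_ifs at this <;> omega
    set T1 : Finset (Fin n) := univ.filter (fun i => m i = 1) with hT1
    set T2 : Finset (Fin n) := univ.filter (fun i => m i = 2) with hT2
    have hT2eq : T2 = A ∩ B := by
      ext i
      have := hc i
      simp only [hT2, Finset.mem_filter, Finset.mem_univ, true_and, Finset.mem_inter]
      split_ifs at this <;> simp_all <;> omega
    have hT1eq : T1 = (A ∪ B) \ (A ∩ B) := by
      ext i
      have := hc i
      simp only [hT1, Finset.mem_filter, Finset.mem_univ, true_and, Finset.mem_sdiff,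
        Finset.mem_union, Finset.mem_inter]
      split_ifs at this <;> simp_all <;> omega
    have hinter : A ∩ B ⊆ A ∪ B := (Finset.inter_subset_left).trans Finset.subset_union_left
    have hcards : (A ∪ B).card + (A ∩ B).card = A.card + B.card :=
      Finset.card_union_add_card_inter A B
    have hs2le : T2.card ≤ p - 1 := by
      rw [hT2eq]
      calc (A ∩ B).card ≤ A.card := Finset.card_le_card Finset.inter_subset_left
        _ = p - 1 := hA
    have hsum : T1.card + 2 * T2.card = (p - 1) + (q + 1) := by
      rw [hT1eq, hT2eq, Finset.card_sdiff_of_subset hinter]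
      have h1 : (A ∩ B).card ≤ (A ∪ B).card := Finset.card_le_card hinter
      omega
    have hsum' : T1.card + 2 * T2.card = p + q := by omega
    rw [count_eq (p - 1) (q + 1) m hm2 (by rw [← hT2]; omega) (by rw [← hT1, ← hT2]; omega),
        count_eq p q m hm2 (by rw [← hT2]; omega) (by rw [← hT1, ← hT2]; omega)]
    rw [← hT1, ← hT2]
    have hsub : p - 1 - T2.card = (p - T2.card) - 1 := by omega
    rw [hsub]
    apply choose_step
    · omega
    · -- 2 * (p - T2.card) ≤ T1.card + 1
      omega
end

section
/- For all n ≥ 1 and all p, q with 0 < p ≤ q < n, the unsigned Stirling numbers of the first kind satisfy c(n,p)·c(n,q) ≥ c(n,p−1)·c(n,q+1), where c(n,k) is the number of permutations of an n-element set with exactly k cycles. -/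
/-- The number of cycles (= orbits, fixed points included) of a permutation of [n]. -/
noncomputable def cycleCount {n : ℕ} (σ : Equiv.Perm (Fin n)) : ℕ :=
  Nat.card (Quotient (Setoid.mk (fun x y => σ.SameCycle x y)
    ⟨fun x => Equiv.Perm.SameCycle.refl σ x, fun h => h.symm, fun h h' => h.trans h'⟩))

/-- The unsigned Stirling number of the first kind: the number of permutations
of [n] with exactly k cycles. -/
noncomputable def stirlingFirst (n k : ℕ) : ℕ :=
  Nat.card {σ : Equiv.Perm (Fin n) // cycleCount σ = k}

namespace StirlingAux

open Equiv Equiv.Perm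

def cs {n : ℕ} (σ : Equiv.Perm (Fin n)) : Setoid (Fin n) :=
  Setoid.mk (fun x y => σ.SameCycle x y)
    ⟨fun x => Equiv.Perm.SameCycle.refl σ x, fun h => h.symm, fun h h' => h.trans h'⟩

abbrev Q {n : ℕ} (σ : Equiv.Perm (Fin n)) := Quotient (cs σ)

theorem cycleCount_def {n : ℕ} (σ : Equiv.Perm (Fin n)) :
    cycleCount σ = Nat.card (Q σ) := rfl

theorem g_const {n : ℕ} {σ : Perm (Fin n)} {β : Sort*} {g : Fin n → β}
    (hg : ∀ z, g (σ z) = g z) : ∀ {a b : Fin n}, σ.SameCycle a b → g a = g b := by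
  have aux : ∀ (i : ℕ) (a : Fin n), g ((σ ^ i) a) = g a := by
    intro i
    induction i with
    | zero => intro a; simp
    | succ i ih =>
      intro a
      have : (σ ^ (i + 1)) a = (σ ^ i) (σ a) := by
        rw [pow_succ, Equiv.Perm.mul_apply]
      rw [this, ih (σ a), hg a]
  intro a b h
  obtain ⟨i, -, -, hi⟩ := h.exists_pow_eq σ
  rw [← hi, aux]

theorem sameCycle_succ {n : ℕ} (p : Fin (n + 1)) (e : Perm (Fin n)) {x y : Fin n}
    (h : e.SameCycle x y) :
    (Equiv.Perm.decomposeFin.symm (p, e)).SameCycle x.succ y.succ := by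
  set τ := Equiv.Perm.decomposeFin.symm (p, e) with hτ
  have step : ∀ z : Fin n, τ.SameCycle z.succ (e z).succ := by
    intro z
    have h1 : τ z.succ = Equiv.swap 0 p (e z).succ :=
      Equiv.Perm.decomposeFin_symm_apply_succ e p z
    have s1 : τ.SameCycle z.succ (τ z.succ) :=
      Equiv.Perm.sameCycle_apply_right.mpr (Equiv.Perm.SameCycle.refl τ z.succ)
    by_cases hp : (e z).succ = p
    · have h2 : τ z.succ = 0 := by rw [h1, hp, Equiv.swap_apply_right]
      have s2 : τ.SameCycle z.succ (τ (τ z.succ)) := Equiv.Perm.sameCycle_apply_right.mpr s1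
      rw [h2] at s2
      have h3 : τ 0 = p := Equiv.Perm.decomposeFin_symm_apply_zero p e
      rw [h3, ← hp] at s2
      exact s2
    · have h2 : τ z.succ = (e z).succ := by
        rw [h1, Equiv.swap_apply_of_ne_of_ne (Fin.succ_ne_zero _) hp]
      rwa [h2] at s1
  obtain ⟨i, -, -, hi⟩ := h.exists_pow_eq e
  rw [← hi]
  clear hi h
  induction i with
  | zero => simpa using Equiv.Perm.SameCycle.refl τ x.succ
  | succ i ih =>
    have : (e ^ (i + 1)) x = e ((e ^ i) x) := by
      rw [pow_succ', Equiv.Perm.mul_apply]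
    rw [this]
    exact ih.trans (step _)


theorem cycleCount_decomposeFin_zero {n : ℕ} (e : Perm (Fin n)) :
    cycleCount (Equiv.Perm.decomposeFin.symm (0, e)) = cycleCount e + 1 := by
  set τ := Equiv.Perm.decomposeFin.symm ((0 : Fin (n + 1)), e) with hτ
  have h0 : τ 0 = 0 := Equiv.Perm.decomposeFin_symm_apply_zero 0 e
  have hs : ∀ x : Fin n, τ x.succ = (e x).succ := by
    intro x
    rw [Equiv.Perm.decomposeFin_symm_apply_succ e 0 x, Equiv.swap_self, Equiv.refl_apply]
  have hg : ∀ z, (fun z => Fin.cases (motive := fun _ => Option (Q e)) none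
      (fun x => some (Quotient.mk (cs e) x)) z) (τ z)
      = (fun z => Fin.cases (motive := fun _ => Option (Q e)) none
      (fun x => some (Quotient.mk (cs e) x)) z) z := by
    intro z
    refine Fin.cases ?_ ?_ z
    · rw [h0]
    · intro x
      simp only [hs x, Fin.cases_succ]
      exact congrArg some (Quotient.sound
        (Equiv.Perm.sameCycle_apply_left.mpr (Equiv.Perm.SameCycle.refl e x)))
  have E : Q τ ≃ Option (Q e) :=
    { toFun := Quotient.lift _ (fun a b hab => g_const hg hab)
      invFun := fun o => Option.rec (Quotient.mk (cs τ) 0)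
        (Quotient.lift (fun x => Quotient.mk (cs τ) x.succ)
          (fun a b hab => Quotient.sound (sameCycle_succ 0 e hab))) o
      left_inv := by
        intro z
        refine Quotient.inductionOn z ?_
        intro z
        refine Fin.cases ?_ ?_ z
        · simp
        · intro x; simp
      right_inv := by
        intro o
        rcases o with - | q
        · simp
        · refine Quotient.inductionOn q ?_
          intro x; simp }
  rw [cycleCount_def, cycleCount_def, Nat.card_congr E, Finite.card_option]

theorem cycleCount_decomposeFin_succ {n : ℕ} (e : Perm (Fin n)) (x₀ : Fin n) :
    cycleCount (Equiv.Perm.decomposeFin.symm (x₀.succ, e)) = cycleCount e := by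
  set τ := Equiv.Perm.decomposeFin.symm (x₀.succ, e) with hτ
  have h0 : τ 0 = x₀.succ := Equiv.Perm.decomposeFin_symm_apply_zero _ e
  have hg : ∀ z, (fun z => Fin.cases (motive := fun _ => Q e) (Quotient.mk (cs e) x₀)
      (fun x => Quotient.mk (cs e) x) z) (τ z)
      = (fun z => Fin.cases (motive := fun _ => Q e) (Quotient.mk (cs e) x₀)
      (fun x => Quotient.mk (cs e) x) z) z := by
    intro z
    refine Fin.cases ?_ ?_ z
    · rw [h0]; simp
    · intro x
      have h1 : τ x.succ = Equiv.swap 0 x₀.succ (e x).succ :=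
        Equiv.Perm.decomposeFin_symm_apply_succ e _ x
      by_cases hex : e x = x₀
      · have h2 : τ x.succ = 0 := by rw [h1, hex, Equiv.swap_apply_right]
        simp only [h2, Fin.cases_zero, Fin.cases_succ]
        rw [← hex]
        exact Quotient.sound (Equiv.Perm.sameCycle_apply_left.mpr (Equiv.Perm.SameCycle.refl e x))
      · have h2 : τ x.succ = (e x).succ := by
          rw [h1, Equiv.swap_apply_of_ne_of_ne (Fin.succ_ne_zero _)
            (fun hc => hex (Fin.succ_injective _ hc))]
        simp only [h2, Fin.cases_succ]
        exact Quotient.sound (Equiv.Perm.sameCycle_apply_left.mpr (Equiv.Perm.SameCycle.refl e x))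
  have E : Q τ ≃ Q e :=
    { toFun := Quotient.lift _ (fun a b hab => g_const hg hab)
      invFun := Quotient.lift (fun x => Quotient.mk (cs τ) x.succ)
        (fun a b hab => Quotient.sound (sameCycle_succ _ e hab))
      left_inv := by
        intro z
        refine Quotient.inductionOn z ?_
        intro z
        refine Fin.cases ?_ ?_ z
        · simp only [Quotient.lift_mk, Fin.cases_zero]
          refine Quotient.sound ?_
          refine Equiv.Perm.SameCycle.symm ?_
          exact ⟨1, by rw [zpow_one, h0]⟩
        · intro x; simp
      right_inv := by
        intro q
        refine Quotient.inductionOn q ?_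
        intro x; simp }
  rw [cycleCount_def, cycleCount_def, Nat.card_congr E]


theorem nat_card_sigma {ι : Type*} [Fintype ι] (f : ι → Type*) [∀ i, Finite (f i)] :
    Nat.card (Σ i, f i) = ∑ i, Nat.card (f i) := by
  have := fun i => Fintype.ofFinite (f i)
  simp [Nat.card_eq_fintype_card, Fintype.card_sigma]

theorem stirlingFirst_succ (n k : ℕ) :
    stirlingFirst (n + 1) k =
      Nat.card {e : Equiv.Perm (Fin n) // cycleCount e + 1 = k} + n * stirlingFirst n k := by
  have e1 : {σ : Equiv.Perm (Fin (n + 1)) // cycleCount σ = k}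
      ≃ {x : Fin (n + 1) × Equiv.Perm (Fin n) //
          cycleCount (Equiv.Perm.decomposeFin.symm x) = k} :=
    Equiv.subtypeEquiv Equiv.Perm.decomposeFin (fun σ => by rw [Equiv.symm_apply_apply])
  have e2 := Equiv.subtypeProdEquivSigmaSubtype
    (fun (p : Fin (n + 1)) (e : Equiv.Perm (Fin n)) =>
      cycleCount (Equiv.Perm.decomposeFin.symm (p, e)) = k)
  rw [stirlingFirst, Nat.card_congr (e1.trans e2), nat_card_sigma, Fin.sum_univ_succ]
  congr 1
  · exact Nat.card_congr (Equiv.subtypeEquivRight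
      (fun e => by rw [cycleCount_decomposeFin_zero]))
  · have : ∀ x : Fin n,
        Nat.card {e : Equiv.Perm (Fin n) //
          cycleCount (Equiv.Perm.decomposeFin.symm (x.succ, e)) = k} = stirlingFirst n k := by
      intro x
      exact Nat.card_congr (Equiv.subtypeEquivRight
        (fun e => by rw [cycleCount_decomposeFin_succ]))
    rw [Finset.sum_congr rfl (fun x _ => this x)]
    simp [mul_comm]

theorem cycleCount_fin_zero (σ : Equiv.Perm (Fin 0)) : cycleCount σ = 0 := by
  have : IsEmpty (Q σ) := ⟨fun q => Quotient.inductionOn q (fun x => x.elim0)⟩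
  rw [cycleCount_def, Nat.card_of_isEmpty]

theorem stirlingFirst_zero_zero : stirlingFirst 0 0 = 1 := by
  rw [stirlingFirst, Nat.card_congr (Equiv.subtypeUnivEquiv cycleCount_fin_zero)]
  simp [Nat.card_eq_fintype_card]

theorem stirlingFirst_zero_succ (k : ℕ) : stirlingFirst 0 (k + 1) = 0 := by
  have : IsEmpty {σ : Equiv.Perm (Fin 0) // cycleCount σ = k + 1} :=
    ⟨fun ⟨σ, h⟩ => by simp [cycleCount_fin_zero] at h⟩
  rw [stirlingFirst, Nat.card_of_isEmpty]


def S : ℕ → ℕ → ℕ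
  | 0, 0 => 1
  | 0, _ + 1 => 0
  | _ + 1, 0 => 0
  | n + 1, k + 1 => S n k + n * S n (k + 1)

theorem stirlingFirst_eq_S : ∀ n k, stirlingFirst n k = S n k := by
  intro n
  induction n with
  | zero =>
    intro k
    cases k with
    | zero => rw [stirlingFirst_zero_zero]; rfl
    | succ k => rw [stirlingFirst_zero_succ]; rfl
  | succ n ih =>
    intro k
    cases k with
    | zero =>
      rw [stirlingFirst_succ]
      have h1 : IsEmpty {e : Equiv.Perm (Fin n) // cycleCount e + 1 = 0} :=
        ⟨fun ⟨e, h⟩ => by omega⟩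
      rw [Nat.card_of_isEmpty, ih]
      show 0 + n * S n 0 = S (n + 1) 0
      cases n with
      | zero => rfl
      | succ m => rfl
    | succ k =>
      rw [stirlingFirst_succ]
      have h1 : Nat.card {e : Equiv.Perm (Fin n) // cycleCount e + 1 = k + 1}
          = stirlingFirst n k :=
        Nat.card_congr (Equiv.subtypeEquivRight (fun e => by omega))
      rw [h1, ih, ih]
      rfl

theorem S_lc : ∀ n r s, r ≤ s → S n r * S n (s + 2) ≤ S n (r + 1) * S n (s + 1) := by
  intro n
  induction n with
  | zero =>
    intro r s _
    have : S 0 (s + 2) = 0 := rfl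
    rw [this, Nat.mul_zero]
    exact Nat.zero_le _
  | succ n ih =>
    intro r s hrs
    cases r with
    | zero =>
      have : S (n + 1) 0 = 0 := rfl
      rw [this, Nat.zero_mul]
      exact Nat.zero_le _
    | succ r =>
      cases s with
      | zero => omega
      | succ s =>
        have hrs' : r ≤ s := by omega
        have hgoal : S (n + 1) (r + 1) * S (n + 1) (s + 3)
            = (S n r + n * S n (r + 1)) * (S n (s + 2) + n * S n (s + 3)) := rfl
        have hgoal2 : S (n + 1) (r + 2) * S (n + 1) (s + 2)
            = (S n (r + 1) + n * S n (r + 2)) * (S n (s + 1) + n * S n (s + 2)) := rfl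
        show S (n + 1) (r + 1) * S (n + 1) (s + 3) ≤ S (n + 1) (r + 2) * S (n + 1) (s + 2)
        rw [hgoal, hgoal2]
        have h1 : S n r * S n (s + 2) ≤ S n (r + 1) * S n (s + 1) := ih r s hrs'
        have h2 : S n r * S n (s + 3) ≤ S n (r + 1) * S n (s + 2) := ih r (s + 1) (by omega)
        have h4 : S n (r + 1) * S n (s + 3) ≤ S n (r + 2) * S n (s + 2) :=
          ih (r + 1) (s + 1) (by omega)
        have h3 : S n (r + 1) * S n (s + 2) ≤ S n (r + 2) * S n (s + 1) := by
          rcases Nat.lt_or_ge r s with hlt | hge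
          · exact ih (r + 1) s hlt
          · have : r = s := by omega
            subst this
            rw [Nat.mul_comm]
        have e1 : (S n r + n * S n (r + 1)) * (S n (s + 2) + n * S n (s + 3))
            = S n r * S n (s + 2) + n * (S n r * S n (s + 3))
              + n * (S n (r + 1) * S n (s + 2)) + n * n * (S n (r + 1) * S n (s + 3)) := by
          ring
        have e2 : (S n (r + 1) + n * S n (r + 2)) * (S n (s + 1) + n * S n (s + 2))
            = S n (r + 1) * S n (s + 1) + n * (S n (r + 1) * S n (s + 2))
              + n * (S n (r + 2) * S n (s + 1)) + n * n * (S n (r + 2) * S n (s + 2)) := by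
          ring
        rw [e1, e2]
        exact add_le_add (add_le_add (add_le_add h1 (mul_le_mul_right h2 n))
          (mul_le_mul_right h3 n)) (mul_le_mul_right h4 (n * n))

end StirlingAux

/-- Strong log-concavity of the unsigned Stirling numbers of the first kind:
for n ≥ 1 and 0 < p ≤ q < n, c(n,p)·c(n,q) ≥ c(n,p−1)·c(n,q+1). -/
theorem stirlingFirst_strongly_log_concave (n p q : ℕ) (hn : 1 ≤ n)
    (hp : 0 < p) (hpq : p ≤ q) (hq : q < n) :
    stirlingFirst n p * stirlingFirst n q ≥
      stirlingFirst n (p - 1) * stirlingFirst n (q + 1) := by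
  rw [ge_iff_le, StirlingAux.stirlingFirst_eq_S, StirlingAux.stirlingFirst_eq_S,
    StirlingAux.stirlingFirst_eq_S, StirlingAux.stirlingFirst_eq_S]
  obtain ⟨p', rfl⟩ : ∃ p', p = p' + 1 := ⟨p - 1, by omega⟩
  obtain ⟨q', rfl⟩ : ∃ q', q = q' + 1 := ⟨q - 1, by omega⟩
  have h := StirlingAux.S_lc n p' q' (by omega)
  simpa using h
end

section
/- Let c_1(x), …, c_n(x) be polynomials in indeterminates x = (x_1,…,x_m) all of whose coefficients are nonnegative, and write Π_{j=1}^{n} (t + c_j(x)) = Σ_{k=0}^{n} a_k(x) t^k. Then the sequence (a_0(x), …, a_n(x)) is strongly x-log-concave: for all p, q with 0 < p ≤ q < n, the polynomial a_p(x)·a_q(x) − a_{p−1}(x)·a_{q+1}(x) has only nonnegative coefficients. -/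
namespace SLC

variable {m : ℕ}

/-- A multivariate polynomial has nonnegative coefficients. -/
def NN (P : MvPolynomial (Fin m) ℝ) : Prop := ∀ mo : Fin m →₀ ℕ, 0 ≤ P.coeff mo

lemma NN.add {P Q : MvPolynomial (Fin m) ℝ} (hP : NN P) (hQ : NN Q) : NN (P + Q) := fun mo => by
  rw [MvPolynomial.coeff_add]; exact add_nonneg (hP mo) (hQ mo)

lemma NN.mul {P Q : MvPolynomial (Fin m) ℝ} (hP : NN P) (hQ : NN Q) : NN (P * Q) := fun mo => by
  rw [MvPolynomial.coeff_mul]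
  exact Finset.sum_nonneg fun x _ => mul_nonneg (hP _) (hQ _)

lemma NN.zero : NN (m := m) 0 := fun mo => by simp

lemma NN.one : NN (m := m) 1 := fun mo => by
  classical
  rw [MvPolynomial.coeff_one]
  split <;> norm_num

/-- The coefficient of `t^k` in `∏_{c ∈ L} (t + c)`. -/
noncomputable def esa : List (MvPolynomial (Fin m) ℝ) → ℕ → MvPolynomial (Fin m) ℝ
  | [], 0 => 1
  | [], _ + 1 => 0
  | c :: L, 0 => c * esa L 0
  | c :: L, k + 1 => esa L k + c * esa L (k + 1)
termination_by L k => L.length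

lemma esa_NN (L : List (MvPolynomial (Fin m) ℝ)) (h : ∀ c ∈ L, NN c) :
    ∀ k, NN (esa L k) := by
  induction L with
  | nil =>
    clear h
    intro k
    cases k with
    | zero => simp only [esa]; exact NN.one
    | succ k => simp only [esa]; exact NN.zero
  | cons c L IH =>
    have hc : NN c := h c (by simp)
    have hL' : ∀ d ∈ L, NN d := fun d hd => h d (by simp [hd])
    have IH' := IH hL'
    intro k
    cases k with
    | zero => simp only [esa]; exact hc.mul (IH' 0)
    | succ k => simp only [esa]; exact (IH' k).add (hc.mul (IH' (k + 1)))

lemma key (L : List (MvPolynomial (Fin m) ℝ)) (hL : ∀ c ∈ L, NN c) :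
    ∀ p q : ℕ, p ≤ q → NN (esa L (p + 1) * esa L q - esa L p * esa L (q + 1)) := by
  induction L with
  | nil =>
    intro p q _ mo
    simp [esa]
  | cons c L IH =>
    have hc : NN c := hL c (by simp)
    have hL' : ∀ d ∈ L, NN d := fun d hd => hL d (by simp [hd])
    have hA : ∀ k, NN (esa L k) := esa_NN L hL'
    intro p q hpq
    match p, q, hpq with
    | 0, 0, _ =>
      have h0 : esa (c :: L) 1 * esa (c :: L) 0 - esa (c :: L) 0 * esa (c :: L) 1
          = 0 := by ring
      rw [h0]; exact NN.zero
    | 0, q1 + 1, _ =>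
      have h1 := IH hL' 0 (q1 + 1) (by omega)
      have hrw : esa (c :: L) 1 * esa (c :: L) (q1 + 1) - esa (c :: L) 0 * esa (c :: L) (q1 + 2)
          = esa L 0 * esa L q1 + c * (esa L 1 * esa L q1)
            + c * c * (esa L 1 * esa L (q1 + 1) - esa L 0 * esa L (q1 + 2)) := by
        simp only [esa]; ring
      rw [hrw]
      exact (((hA 0).mul (hA q1)).add (hc.mul ((hA 1).mul (hA q1)))).add ((hc.mul hc).mul h1)
    | p1 + 1, q1 + 1, hpq =>
      rcases eq_or_lt_of_le (show p1 ≤ q1 by omega) with heq | hlt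
      · subst heq
        have h0 : esa (c :: L) (p1 + 2) * esa (c :: L) (p1 + 1)
            - esa (c :: L) (p1 + 1) * esa (c :: L) (p1 + 2) = 0 := by ring
        rw [h0]; exact NN.zero
      · have h1 := IH hL' p1 q1 (le_of_lt hlt)
        have h2 := IH hL' (p1 + 1) q1 (by omega)
        have h3 := IH hL' p1 (q1 + 1) (by omega)
        have h4 := IH hL' (p1 + 1) (q1 + 1) (by omega)
        have hrw : esa (c :: L) (p1 + 2) * esa (c :: L) (q1 + 1)
            - esa (c :: L) (p1 + 1) * esa (c :: L) (q1 + 2)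
            = (esa L (p1 + 1) * esa L q1 - esa L p1 * esa L (q1 + 1))
              + c * ((esa L (p1 + 2) * esa L q1 - esa L (p1 + 1) * esa L (q1 + 1))
                   + (esa L (p1 + 1) * esa L (q1 + 1) - esa L p1 * esa L (q1 + 2)))
              + c * c * (esa L (p1 + 2) * esa L (q1 + 1) - esa L (p1 + 1) * esa L (q1 + 2)) := by
          simp only [esa]; ring
        rw [hrw]
        exact (h1.add (hc.mul (h2.add h3))).add ((hc.mul hc).mul h4)

lemma coeff_prod (L : List (MvPolynomial (Fin m) ℝ)) (k : ℕ) :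
    ((L.map fun d => Polynomial.X + Polynomial.C d).prod).coeff k = esa L k := by
  induction L generalizing k with
  | nil => cases k <;> simp [esa, Polynomial.coeff_one]
  | cons c L IH =>
    have hsplit : ((c :: L).map fun d => Polynomial.X + Polynomial.C d).prod
        = (Polynomial.X + Polynomial.C c)
          * ((L.map fun d => Polynomial.X + Polynomial.C d).prod) := by
      simp
    rw [hsplit, add_mul, Polynomial.coeff_add, Polynomial.coeff_C_mul]
    cases k with
    | zero => simp [esa, IH, Polynomial.mul_coeff_zero, Polynomial.coeff_X_zero]
    | succ k => rw [Polynomial.coeff_X_mul]; simp [esa, IH]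

end SLC

/-- If c_1(x), …, c_n(x) are polynomials with nonnegative coefficients and
Π_j (t + c_j(x)) = Σ_k a_k(x) t^k, then the sequence (a_0(x), …, a_n(x)) is
strongly x-log-concave. -/
theorem prod_linear_strongly_x_log_concave (m n : ℕ)
    (c : Fin n → MvPolynomial (Fin m) ℝ)
    (hc : ∀ j, ∀ mo : Fin m →₀ ℕ, 0 ≤ (c j).coeff mo)
    (a : ℕ → MvPolynomial (Fin m) ℝ)
    (ha : ∏ j : Fin n, (Polynomial.X + Polynomial.C (c j)) =
      ∑ k ∈ Finset.range (n + 1), Polynomial.C (a k) * Polynomial.X ^ k)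
    (p q : ℕ) (hp : 0 < p) (hpq : p ≤ q) (hq : q < n) :
    ∀ mo : Fin m →₀ ℕ,
      0 ≤ (a p * a q - a (p - 1) * a (q + 1)).coeff mo := by
  classical
  obtain ⟨p', rfl⟩ : ∃ p', p = p' + 1 := ⟨p - 1, by omega⟩
  set L : List (MvPolynomial (Fin m) ℝ) := List.ofFn c with hLdef
  have hL : ∀ d ∈ L, SLC.NN d := by
    intro d hd
    rw [hLdef, List.mem_ofFn] at hd
    obtain ⟨j, rfl⟩ := hd
    exact hc j
  have hprod : (L.map fun d => Polynomial.X + Polynomial.C d).prod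
      = ∏ j : Fin n, (Polynomial.X + Polynomial.C (c j)) := by
    rw [hLdef, List.map_ofFn, List.prod_ofFn]; rfl
  have hak : ∀ k, k ≤ n → a k = SLC.esa L k := by
    intro k hk
    have h1 := congrArg (fun P => Polynomial.coeff P k) ha
    rw [← hprod, SLC.coeff_prod] at h1
    have h2 : (∑ k' ∈ Finset.range (n + 1),
        Polynomial.C (a k') * Polynomial.X ^ k').coeff k = a k := by
      rw [Polynomial.finset_sum_coeff]
      have hall : ∀ i ∈ Finset.range (n + 1),
          (Polynomial.C (a i) * Polynomial.X ^ i).coeff k = if k = i then a i else 0 := by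
        intro i _
        rw [Polynomial.coeff_C_mul, Polynomial.coeff_X_pow]
        split <;> simp
      rw [Finset.sum_congr rfl hall, Finset.sum_ite_eq]
      simp [Finset.mem_range, Nat.lt_succ_of_le hk]
    rw [← h2]
    exact h1.symm
  have hkey := SLC.key L hL p' q (by omega)
  simp only [Nat.add_sub_cancel]
  rw [hak (p' + 1) (by omega), hak q (by omega), hak p' (by omega),
    hak (q + 1) (by omega)]
  exact fun mo => hkey mo
end
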